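/- arXiv:math/0701437 — 10 statements merged into one kernel-verified Lean document; each statement's English description precedes it below -/
import Mathlib

section
/- |c − r₀| ≤ r₀³ (V₀')² / (2(1 + V₀)²). -/
/-!
At an interior maximum of `v = r (1 + V)` the first-order condition `v'(z₀) = 0` reads
`z₀ (1 + V₀) = r₀² V₀'`. Since `c - r₀ = z₀² / (c + r₀) ≤ z₀² / (2 r₀)`, substituting
`z₀ = r₀² V₀' / (1 + V₀)` gives the bound.
-/

open Real Set

lemma sq_sub_sq_pos_of_abs_lt {c z : ℝ} (hz : |z| < c) : 0 < c ^ 2 - z ^ 2 := by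
  nlinarith [sq_abs z, abs_nonneg z]

lemma hasDerivAt_sqrt_sq_sub_sq {c x : ℝ} (hx : |x| < c) :
    HasDerivAt (fun y => √(c ^ 2 - y ^ 2)) (-x / √(c ^ 2 - x ^ 2)) x := by
  have hpos : 0 < c ^ 2 - x ^ 2 := sq_sub_sq_pos_of_abs_lt hx
  have hinner : HasDerivAt (fun y : ℝ => c ^ 2 - y ^ 2) (-(2 * x)) x := by
    simpa using (hasDerivAt_pow 2 x).const_sub (c ^ 2)
  convert hinner.sqrt hpos.ne' using 1
  have := sqrt_pos.mpr hpos
  field_simp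

lemma sqrt_sq_sub_sq_le {c z : ℝ} (hc : 0 ≤ c) : √(c ^ 2 - z ^ 2) ≤ c :=
  sqrt_le_iff.mpr ⟨hc, by nlinarith [sq_nonneg z]⟩

lemma sub_sqrt_sq_sub_sq_le {c z : ℝ} (hz : |z| < c) :
    c - √(c ^ 2 - z ^ 2) ≤ z ^ 2 / (2 * √(c ^ 2 - z ^ 2)) := by
  have hpos : 0 < c ^ 2 - z ^ 2 := sq_sub_sq_pos_of_abs_lt hz
  set s := √(c ^ 2 - z ^ 2)
  have hs : 0 < s := sqrt_pos.mpr hpos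
  have hssq : s ^ 2 = c ^ 2 - z ^ 2 := sq_sqrt hpos.le
  have hsc : s ≤ c := sqrt_sq_sub_sq_le ((abs_nonneg z).trans hz.le)
  rw [le_div_iff₀ (by positivity)]
  -- `(c - s)(c + s) = z²` and `2 s ≤ c + s`
  nlinarith [mul_le_mul_of_nonneg_left (show 2 * s ≤ c + s by linarith) (sub_nonneg.mpr hsc)]

lemma mul_eq_of_isLocalMax_sqrt_sq_sub_sq_mul {c z g' : ℝ} {g : ℝ → ℝ} (hz : |z| < c)
    (hg : HasDerivAt g g' z) (hmax : IsLocalMax (fun x => √(c ^ 2 - x ^ 2) * g x) z) :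
    z * g z = (c ^ 2 - z ^ 2) * g' := by
  have hpos : 0 < c ^ 2 - z ^ 2 := sq_sub_sq_pos_of_abs_lt hz
  have hs : 0 < √(c ^ 2 - z ^ 2) := sqrt_pos.mpr hpos
  have hcrit := hmax.hasDerivAt_eq_zero ((hasDerivAt_sqrt_sq_sub_sq hz).mul hg)
  field_simp at hcrit
  rw [sq_sqrt hpos.le] at hcrit
  linarith

theorem stmt_1_general
    (c : ℝ)
    (V V' : ℝ → ℝ)
    (hV1 : ∀ x ∈ Set.Icc (-c) c, HasDerivAt V (V' x) x)
    (hVnn : ∀ x ∈ Set.Icc (-c) c, 0 ≤ V x)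
    (r v : ℝ → ℝ)
    (hr : ∀ x, r x = Real.sqrt (c ^ 2 - x ^ 2))
    (hv : ∀ x, v x = r x * (1 + V x))
    (z₀ : ℝ) (hz₀ : z₀ ∈ Set.Ioo (-c) c)
    (hmax : ∀ x ∈ Set.Icc (-c) c, v x ≤ v z₀)
    :
    |c - r z₀| ≤ (r z₀) ^ 3 * (V' z₀) ^ 2 / (2 * (1 + V z₀) ^ 2) := by
  have hz : |z₀| < c := abs_lt.mpr hz₀
  have hzIcc : z₀ ∈ Icc (-c) c := Ioo_subset_Icc_self hz₀
  have hV : 0 < 1 + V z₀ := by linarith [hVnn z₀ hzIcc]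
  have hloc : IsLocalMax (fun x => √(c ^ 2 - x ^ 2) * (1 + V x)) z₀ :=
    Filter.eventually_of_mem (Ioo_mem_nhds hz₀.1 hz₀.2) fun x hx => by
      simpa only [hv, hr] using hmax x (Ioo_subset_Icc_self hx)
  have hcrit := mul_eq_of_isLocalMax_sqrt_sq_sub_sq_mul hz ((hV1 z₀ hzIcc).const_add 1) hloc
  rw [hr]
  set s := √(c ^ 2 - z₀ ^ 2)
  have hssq : s ^ 2 = c ^ 2 - z₀ ^ 2 := sq_sqrt (sq_sub_sq_pos_of_abs_lt hz).le
  have hs : 0 < s := sqrt_pos.mpr (sq_sub_sq_pos_of_abs_lt hz)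
  rw [← hssq] at hcrit
  rw [abs_of_nonneg (sub_nonneg.mpr (sqrt_sq_sub_sq_le (abs_nonneg z₀ |>.trans hz.le)))]
  calc c - s ≤ z₀ ^ 2 / (2 * s) := sub_sqrt_sq_sub_sq_le hz
    _ = s ^ 3 * V' z₀ ^ 2 / (2 * (1 + V z₀) ^ 2) := by
      rw [div_eq_div_iff (by positivity) (by positivity)]
      linear_combination 2 * (z₀ * (1 + V z₀) + s ^ 2 * V' z₀) * hcrit

theorem stmt_1
    (c : ℝ) (hc : 0 < c)
    (V V' V'' : ℝ → ℝ)
    (hV1 : ∀ x ∈ Set.Icc (-c) c, HasDerivAt V (V' x) x)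
    (hV2 : ∀ x ∈ Set.Icc (-c) c, HasDerivAt V' (V'' x) x)
    (hV2c : ContinuousOn V'' (Set.Icc (-c) c))
    (hVnn : ∀ x ∈ Set.Icc (-c) c, 0 ≤ V x)
    (r v : ℝ → ℝ)
    (hr : ∀ x, r x = Real.sqrt (c ^ 2 - x ^ 2))
    (hv : ∀ x, v x = r x * (1 + V x))
    (z₀ : ℝ) (hz₀ : z₀ ∈ Set.Ioo (-c) c)
    (hmax : ∀ x ∈ Set.Icc (-c) c, v x ≤ v z₀)
    :
    |c - r z₀| ≤ (r z₀) ^ 3 * (V' z₀) ^ 2 / (2 * (1 + V z₀) ^ 2) :=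
  stmt_1_general c V V' hV1 hVnn r v hr hv z₀ hz₀ hmax
end

section
/- |a − (c²/2)(1 + V(0))| ≤ (c⁴/8) M''. -/
theorem stmt_5
    (c : ℝ) (hc : 0 < c)
    (V V' V'' : ℝ → ℝ)
    (hV1 : ∀ x ∈ Set.Icc (-c) c, HasDerivAt V (V' x) x)
    (hV2 : ∀ x ∈ Set.Icc (-c) c, HasDerivAt V' (V'' x) x)
    (hV2c : ContinuousOn V'' (Set.Icc (-c) c))
    (hVnn : ∀ x ∈ Set.Icc (-c) c, 0 ≤ V x)
    (r v : ℝ → ℝ)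
    (hr : ∀ x, r x = Real.sqrt (c ^ 2 - x ^ 2))
    (hv : ∀ x, v x = r x * (1 + V x))
    (M M' M'' : ℝ)
    (hM : IsLUB (V '' Set.Icc (-c) c) M)
    (hM' : IsLUB ((fun x => |V' x|) '' Set.Icc (-c) c) M')
    (hM'' : IsLUB ((fun x => |V'' x|) '' Set.Icc (-c) c) M'')
    (a : ℝ) (ha : a = (1 / Real.pi) * ∫ x in (-c)..c, v x)
    :
    |a - c ^ 2 / 2 * (1 + V 0)| ≤ c ^ 4 / 8 * M'' := by
  have hcc : -c ≤ c := by linarith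
  have h0mem : (0:ℝ) ∈ Set.Icc (-c) c := ⟨by linarith, hc.le⟩
  have hM''ub : ∀ t ∈ Set.Icc (-c) c, |V'' t| ≤ M'' := fun t ht => hM''.1 ⟨t, ht, rfl⟩
  have hM''0 : 0 ≤ M'' := le_trans (abs_nonneg _) (hM''ub 0 h0mem)
  have hrc : Continuous r := by
    have : r = fun x => Real.sqrt (c ^ 2 - x ^ 2) := funext hr
    rw [this]; continuity
  have hVc : ContinuousOn V (Set.Icc (-c) c) :=
    fun x hx => (hV1 x hx).continuousAt.continuousWithinAt
  have hV'c : ContinuousOn V' (Set.Icc (-c) c) :=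
    fun x hx => (hV2 x hx).continuousAt.continuousWithinAt
  have huIcc : Set.uIcc (-c) c = Set.Icc (-c) c := Set.uIcc_of_le hcc
  have hrb : ∀ x, 0 ≤ r x ∧ r x ≤ c := by
    intro x
    constructor
    · rw [hr]; exact Real.sqrt_nonneg _
    · rw [hr]
      calc Real.sqrt (c ^ 2 - x ^ 2) ≤ Real.sqrt (c ^ 2) := by
            apply Real.sqrt_le_sqrt; nlinarith [sq_nonneg x]
        _ = c := Real.sqrt_sq hc.le
  -- Step 1: ∫ r = π c² / 2
  have hI0 : (∫ x in (-c)..c, r x) = Real.pi * c ^ 2 / 2 := by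
    have h1 : ∀ x, r x = c * Real.sqrt (1 - (x / c) ^ 2) := by
      intro x
      rw [hr, show c ^ 2 - x ^ 2 = c ^ 2 * (1 - (x / c) ^ 2) by field_simp,
        Real.sqrt_mul (sq_nonneg c), Real.sqrt_sq hc.le]
    simp_rw [h1]
    rw [intervalIntegral.integral_const_mul,
      intervalIntegral.integral_comp_div (f := fun u => Real.sqrt (1 - u ^ 2)) hc.ne',
      neg_div, div_self hc.ne', integral_sqrt_one_sub_sq]
    simp; ring
  -- Step 2: odd integral vanishes
  have hgint : ∀ p q : ℝ, IntervalIntegrable (fun x => x * r x) MeasureTheory.volume p q :=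
    fun p q => (continuous_id.mul hrc).intervalIntegrable _ _
  have hodd : (∫ x in (-c)..c, x * r x) = 0 := by
    have hrev : ∀ x : ℝ, (-x) * r (-x) = -(x * r x) := by
      intro x
      have : r (-x) = r x := by rw [hr, hr]; ring_nf
      rw [this]; ring
    have h2 : (∫ x in (0:ℝ)..c, (fun x => x * r x) (-x)) = ∫ x in (-c)..(0:ℝ), x * r x := by
      rw [intervalIntegral.integral_comp_neg (fun x => x * r x)]; norm_num
    have h3 : (∫ x in (-c)..(0:ℝ), x * r x) = -(∫ x in (0:ℝ)..c, x * r x) := by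
      rw [← h2]
      simp only [hrev]
      rw [intervalIntegral.integral_neg]
    rw [← intervalIntegral.integral_add_adjacent_intervals (hgint (-c) 0) (hgint 0 c), h3,
      neg_add_cancel]
  -- Step 3: Taylor bound
  set h : ℝ → ℝ := fun x => V x - V 0 - V' 0 * x with hh
  have hV'lip : ∀ t ∈ Set.Icc (-c) c, |V' t - V' 0| ≤ M'' * |t| := by
    intro t ht
    have := (convex_Icc (-c) c).norm_image_sub_le_of_norm_hasDerivWithin_le
      (f := V') (f' := V'') (fun x hx => (hV2 x hx).hasDerivWithinAt)
      (fun x hx => hM''ub x hx) h0mem ht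
    simpa using this
  have hsub : ∀ x ∈ Set.Icc (-c) c, Set.uIcc 0 x ⊆ Set.Icc (-c) c := by
    intro x hx
    rw [← huIcc]
    exact Set.uIcc_subset_uIcc (huIcc ▸ h0mem) (huIcc ▸ hx)
  have hV'int : ∀ x ∈ Set.Icc (-c) c, IntervalIntegrable V' MeasureTheory.volume 0 x :=
    fun x hx => (hV'c.mono (hsub x hx)).intervalIntegrable
  have hVftc : ∀ x ∈ Set.Icc (-c) c, V x - V 0 = ∫ t in (0:ℝ)..x, V' t := by
    intro x hx
    rw [intervalIntegral.integral_eq_sub_of_hasDerivAt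
      (fun t ht => hV1 t (hsub x hx ht)) (hV'int x hx)]
  have hint : ∀ x ∈ Set.Icc (-c) c, h x = ∫ t in (0:ℝ)..x, (V' t - V' 0) := by
    intro x hx
    rw [intervalIntegral.integral_sub (hV'int x hx) intervalIntegrable_const,
      ← hVftc x hx, intervalIntegral.integral_const]
    simp [hh]; ring
  have hdiffint : ∀ x ∈ Set.Icc (-c) c,
      IntervalIntegrable (fun t => |V' t - V' 0|) MeasureTheory.volume 0 x := by
    intro x hx
    exact (((hV'c.mono (hsub x hx)).sub continuousOn_const).abs).intervalIntegrable
  have htay : ∀ x ∈ Set.Icc (-c) c, |h x| ≤ M'' / 2 * x ^ 2 := by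
    intro x hx
    rcases le_total 0 x with hx0 | hx0
    · calc |h x| = |∫ t in (0:ℝ)..x, (V' t - V' 0)| := by rw [hint x hx]
        _ ≤ ∫ t in (0:ℝ)..x, |V' t - V' 0| :=
            intervalIntegral.abs_integral_le_integral_abs hx0
        _ ≤ ∫ t in (0:ℝ)..x, M'' * t := by
            apply intervalIntegral.integral_mono_on hx0 (hdiffint x hx)
              ((continuous_const.mul continuous_id).intervalIntegrable _ _)
            intro t ht
            have htm : t ∈ Set.Icc (-c) c := hsub x hx (by
              rw [Set.uIcc_of_le hx0]; exact ht)
            have := hV'lip t htm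
            rwa [abs_of_nonneg ht.1] at this
        _ = M'' / 2 * x ^ 2 := by
            rw [intervalIntegral.integral_const_mul, integral_id]; ring
    · calc |h x| = |∫ t in x..(0:ℝ), (V' t - V' 0)| := by
            rw [hint x hx, intervalIntegral.integral_symm, abs_neg]
        _ ≤ ∫ t in x..(0:ℝ), |V' t - V' 0| :=
            intervalIntegral.abs_integral_le_integral_abs hx0
        _ ≤ ∫ t in x..(0:ℝ), M'' * (-t) := by
            apply intervalIntegral.integral_mono_on hx0 ((hdiffint x hx).symm)
              ((continuous_const.mul continuous_neg).intervalIntegrable _ _)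
            intro t ht
            have htm : t ∈ Set.Icc (-c) c := hsub x hx (by
              rw [Set.uIcc_of_ge hx0]; exact ht)
            have := hV'lip t htm
            rwa [abs_of_nonpos ht.2] at this
        _ = M'' / 2 * x ^ 2 := by
            simp_rw [mul_neg]
            rw [intervalIntegral.integral_neg, intervalIntegral.integral_const_mul, integral_id]
            ring
  have hhc : ContinuousOn h (Set.Icc (-c) c) := by
    apply ContinuousOn.sub (hVc.sub continuousOn_const)
    exact (continuous_const.mul continuous_id).continuousOn
  have hrhint : IntervalIntegrable (fun x => r x * h x) MeasureTheory.volume (-c) c := by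
    apply ContinuousOn.intervalIntegrable
    rw [huIcc]
    exact hrc.continuousOn.mul hhc
  -- Step 4: main decomposition
  have key : (∫ x in (-c)..c, v x)
      = (1 + V 0) * (Real.pi * c ^ 2 / 2) + V' 0 * (∫ x in (-c)..c, x * r x)
        + ∫ x in (-c)..c, r x * h x := by
    have hvdec : ∀ x, v x = (1 + V 0) * r x + V' 0 * (x * r x) + r x * h x := by
      intro x; rw [hv, hh]; ring
    simp_rw [hvdec]
    rw [intervalIntegral.integral_add, intervalIntegral.integral_add,
      intervalIntegral.integral_const_mul, intervalIntegral.integral_const_mul, hI0]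
    · exact (continuous_const.mul hrc).intervalIntegrable _ _
    · exact (continuous_const.mul (continuous_id.mul hrc)).intervalIntegrable _ _
    · exact ((continuous_const.mul hrc).add
        (continuous_const.mul (continuous_id.mul hrc))).intervalIntegrable _ _
    · exact hrhint
  have hK : |∫ x in (-c)..c, r x * h x| ≤ M'' * c ^ 4 / 3 := by
    calc |∫ x in (-c)..c, r x * h x| ≤ ∫ x in (-c)..c, |r x * h x| :=
          intervalIntegral.abs_integral_le_integral_abs hcc
      _ ≤ ∫ x in (-c)..c, c * (M'' / 2 * x ^ 2) := by
          apply intervalIntegral.integral_mono_on hcc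
          · apply ContinuousOn.intervalIntegrable
            rw [huIcc]
            exact (hrc.continuousOn.mul hhc).abs
          · exact (continuous_const.mul
              (continuous_const.mul (continuous_pow 2))).intervalIntegrable _ _
          · intro t ht
            rw [abs_mul, abs_of_nonneg (hrb t).1]
            exact mul_le_mul (hrb t).2 (htay t ht) (abs_nonneg _) hc.le
      _ = M'' * c ^ 4 / 3 := by
          rw [intervalIntegral.integral_const_mul, intervalIntegral.integral_const_mul,
            integral_pow]
          ring
  have hπ3 : (3:ℝ) < Real.pi := Real.pi_gt_three
  have hπ0 : (0:ℝ) < Real.pi := by linarith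
  have hdiff : a - c ^ 2 / 2 * (1 + V 0) = (1 / Real.pi) * ∫ x in (-c)..c, r x * h x := by
    rw [ha, key, hodd]
    field_simp
    ring
  rw [hdiff, abs_mul, abs_of_nonneg (by positivity : (0:ℝ) ≤ 1 / Real.pi)]
  have h13 : 1 / Real.pi ≤ 1 / 3 := by
    apply one_div_le_one_div_of_le <;> linarith
  calc 1 / Real.pi * |∫ x in (-c)..c, r x * h x| ≤ (1/3) * (M'' * c ^ 4 / 3) :=
        mul_le_mul h13 hK (abs_nonneg _) (by norm_num)
    _ ≤ c ^ 4 / 8 * M'' := by nlinarith [mul_nonneg hM''0 (pow_nonneg hc.le 4)]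
end

section
/- Let A = (4/π)∫_{−c}^{c} x v(x) dx. Then |A| ≤ (c⁴/2) M'. -/
/-!
With `F = -r³/3` one has `F' = x r` and `F(±c) = 0`, so integration by parts gives
`∫ x r (1 + V) = (1/3) ∫ r³ V'`. Hence `|∫ x v| ≤ (M'/3) ∫ r³ = π c⁴ M' / 8`, using
`∫_{-c}^{c} (c² - x²)^{3/2} = 3π c⁴ / 8`.
-/

open Real Set MeasureTheory

noncomputable def semicircle (c x : ℝ) : ℝ := √(c ^ 2 - x ^ 2)

@[simp]
lemma semicircle_self (c : ℝ) : semicircle c c = 0 := by simp [semicircle]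

@[simp]
lemma semicircle_neg_self (c : ℝ) : semicircle c (-c) = 0 := by simp [semicircle]

lemma semicircle_nonneg (c x : ℝ) : 0 ≤ semicircle c x := sqrt_nonneg _

lemma semicircle_sq {c x : ℝ} (hx : x ^ 2 ≤ c ^ 2) : semicircle c x ^ 2 = c ^ 2 - x ^ 2 :=
  sq_sqrt (sub_nonneg.2 hx)

@[fun_prop]
lemma continuous_semicircle (c : ℝ) : Continuous (semicircle c) := by
  unfold semicircle; fun_prop

lemma semicircle_mul (c x : ℝ) (hc : 0 ≤ c) : semicircle c (c * x) = c * semicircle 1 x := by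
  rw [semicircle, semicircle, show c ^ 2 - (c * x) ^ 2 = c ^ 2 * (1 ^ 2 - x ^ 2) by ring,
    sqrt_mul (sq_nonneg c), sqrt_sq hc]

lemma hasDerivAt_semicircle_pow_three {c x : ℝ} (hx : x ^ 2 < c ^ 2) :
    HasDerivAt (fun y ↦ semicircle c y ^ 3) (-3 * x * semicircle c x) x := by
  have hpos : 0 < c ^ 2 - x ^ 2 := sub_pos.2 hx
  have hne : semicircle c x ≠ 0 := (sqrt_pos.2 hpos).ne'
  refine ((((hasDerivAt_id x).fun_pow 2).const_sub (c ^ 2)).sqrt hpos.ne').fun_pow 3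
    |>.congr_deriv ?_
  simp only [id_eq]
  rw [show √(c ^ 2 - x ^ 2) = semicircle c x from rfl]
  field_simp
  ring

/-- With `r = √(1 - x²)`, `x r³` has derivative `4 r³ - 3 r`, and `∫ r = π / 2`. -/
lemma integral_semicircle_one_pow_three :
    ∫ x in (-1 : ℝ)..1, semicircle 1 x ^ 3 = 3 * π / 8 := by
  have hderiv : ∀ x ∈ Ioo (-1 : ℝ) 1, HasDerivAt (fun y ↦ y * semicircle 1 y ^ 3)
      (4 * semicircle 1 x ^ 3 - 3 * semicircle 1 x) x := by
    intro x hx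
    have hx2 : x ^ 2 < 1 ^ 2 := sq_lt_sq' hx.1 hx.2
    have hsq := semicircle_sq hx2.le
    refine ((hasDerivAt_id x).fun_mul (hasDerivAt_semicircle_pow_three hx2)).congr_deriv ?_
    simp only [id_eq]
    linear_combination (-3) * semicircle 1 x * hsq
  have hftc := intervalIntegral.integral_eq_sub_of_hasDeriv_right_of_le (by norm_num) (by fun_prop)
    (fun x hx ↦ (hderiv x hx).hasDerivWithinAt) (by apply Continuous.intervalIntegrable; fun_prop)
  have hi3 : IntervalIntegrable (fun x ↦ semicircle 1 x ^ 3) volume (-1) 1 := by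
    apply Continuous.intervalIntegrable; fun_prop
  have hi1 : IntervalIntegrable (semicircle 1) volume (-1) 1 := by
    apply Continuous.intervalIntegrable; fun_prop
  rw [intervalIntegral.integral_sub (hi3.const_mul 4) (hi1.const_mul 3),
    intervalIntegral.integral_const_mul, intervalIntegral.integral_const_mul] at hftc
  have hhalf : ∫ x in (-1 : ℝ)..1, semicircle 1 x = π / 2 := by
    simpa [semicircle] using integral_sqrt_one_sub_sq
  simp only [semicircle_self, semicircle_neg_self] at hftc
  linarith

lemma integral_semicircle_pow_three {c : ℝ} (hc : 0 ≤ c) :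
    ∫ x in (-c)..c, semicircle c x ^ 3 = 3 * π / 8 * c ^ 4 := by
  have hscale := intervalIntegral.smul_integral_comp_mul_left (a := -1) (b := 1)
    (fun x ↦ semicircle c x ^ 3) c
  simp only [semicircle_mul c _ hc, mul_pow, intervalIntegral.integral_const_mul,
    integral_semicircle_one_pow_three, mul_neg, mul_one, smul_eq_mul] at hscale
  rw [← hscale]
  ring

lemma integral_mul_semicircle_mul {c : ℝ} (hc : 0 ≤ c) {g g' : ℝ → ℝ}
    (hg : ∀ x ∈ Icc (-c) c, HasDerivAt g (g' x) x) (hg' : IntervalIntegrable g' volume (-c) c) :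
    ∫ x in (-c)..c, x * semicircle c x * g x =
      (1 / 3) * ∫ x in (-c)..c, semicircle c x ^ 3 * g' x := by
  have hcc : -c ≤ c := by linarith
  have hF : ∀ x ∈ Ioo (min (-c) c) (max (-c) c),
      HasDerivAt (fun y ↦ -(1 / 3) * semicircle c y ^ 3) (x * semicircle c x) x := by
    intro x hx
    rw [min_eq_left hcc, max_eq_right hcc] at hx
    exact ((hasDerivAt_semicircle_pow_three (sq_lt_sq' hx.1 hx.2)).const_mul _).congr_deriv
      (by ring)
  have hparts := intervalIntegral.integral_mul_deriv_eq_deriv_mul_of_hasDerivAt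
    (fun x hx ↦ (hg x (uIcc_of_le hcc ▸ hx)).continuousAt.continuousWithinAt)
    (by fun_prop : ContinuousOn (fun y ↦ -(1 / 3) * semicircle c y ^ 3) _)
    (fun x hx ↦ hg x (Ioo_subset_Icc_self (by rwa [min_eq_left hcc, max_eq_right hcc] at hx)))
    hF hg' (by apply Continuous.intervalIntegrable; fun_prop)
  simp only [semicircle_self, semicircle_neg_self, ne_eq, OfNat.ofNat_ne_zero, not_false_eq_true,
    zero_pow, mul_zero, sub_zero, zero_sub] at hparts
  calc ∫ x in (-c)..c, x * semicircle c x * g x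
      = ∫ x in (-c)..c, g x * (x * semicircle c x) := by congr 1; ext x; ring
    _ = -∫ x in (-c)..c, g' x * (-(1 / 3) * semicircle c x ^ 3) := hparts
    _ = (1 / 3) * ∫ x in (-c)..c, semicircle c x ^ 3 * g' x := by
      rw [← intervalIntegral.integral_neg, ← intervalIntegral.integral_const_mul]
      congr 1; ext x; ring

lemma intervalIntegrable_of_hasDerivAt_of_norm_le {E : Type*} [NormedAddCommGroup E]
    [NormedSpace ℝ E] [CompleteSpace E] {f f' : ℝ → E} {a b K : ℝ} (hab : a ≤ b)
    (hf : ∀ x ∈ Icc a b, HasDerivAt f (f' x) x) (hK : ∀ x ∈ Icc a b, ‖f' x‖ ≤ K) :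
    IntervalIntegrable f' volume a b := by
  rw [intervalIntegrable_iff_integrableOn_Icc_of_le hab]
  refine IntegrableOn.of_bound measure_Icc_lt_top ?_ K
    (ae_restrict_of_forall_mem measurableSet_Icc hK)
  exact (aestronglyMeasurable_deriv f _).congr
    (ae_restrict_of_forall_mem measurableSet_Icc fun x hx ↦ (hf x hx).deriv)

lemma abs_integral_mul_semicircle_mul_le {c K : ℝ} (hc : 0 ≤ c) {g g' : ℝ → ℝ}
    (hg : ∀ x ∈ Icc (-c) c, HasDerivAt g (g' x) x) (hK : ∀ x ∈ Icc (-c) c, |g' x| ≤ K) :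
    |∫ x in (-c)..c, x * semicircle c x * g x| ≤ π * c ^ 4 / 8 * K := by
  have hcc : -c ≤ c := by linarith
  have hg' := intervalIntegrable_of_hasDerivAt_of_norm_le hcc hg hK
  rw [integral_mul_semicircle_mul hc hg hg', abs_mul, abs_of_pos (by norm_num : (0 : ℝ) < 1 / 3)]
  calc 1 / 3 * |∫ x in (-c)..c, semicircle c x ^ 3 * g' x|
      ≤ 1 / 3 * ∫ x in (-c)..c, semicircle c x ^ 3 * K := by
        gcongr
        rw [← Real.norm_eq_abs]
        refine intervalIntegral.norm_integral_le_of_norm_le hcc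
          (ae_of_all volume fun x hx ↦ ?_)
          ((by fun_prop : Continuous fun x ↦ semicircle c x ^ 3 * K).intervalIntegrable _ _)
        rw [norm_mul, norm_of_nonneg (pow_nonneg (semicircle_nonneg c x) 3)]
        exact mul_le_mul_of_nonneg_left (hK x (Ioc_subset_Icc_self hx))
          (pow_nonneg (semicircle_nonneg c x) 3)
    _ = π * c ^ 4 / 8 * K := by
        rw [intervalIntegral.integral_mul_const, integral_semicircle_pow_three hc]
        ring

theorem stmt_6_general
    (c : ℝ) (hc : 0 < c)
    (V V' : ℝ → ℝ)
    (hV1 : ∀ x ∈ Set.Icc (-c) c, HasDerivAt V (V' x) x)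
    (r v : ℝ → ℝ)
    (hr : ∀ x, r x = Real.sqrt (c ^ 2 - x ^ 2))
    (hv : ∀ x, v x = r x * (1 + V x))
    (M' : ℝ)
    (hM' : IsLUB ((fun x => |V' x|) '' Set.Icc (-c) c) M')
    (A : ℝ) (hA : A = (4 / Real.pi) * ∫ x in (-c)..c, x * v x)
    :
    |A| ≤ c ^ 4 / 2 * M' := by
  have hI : |∫ x in (-c)..c, x * v x| ≤ π * c ^ 4 / 8 * M' := by
    have h := abs_integral_mul_semicircle_mul_le hc.le (fun x hx ↦ (hV1 x hx).const_add 1)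
      fun x hx ↦ hM'.1 ⟨x, hx, rfl⟩
    simpa only [hv, hr, semicircle, mul_assoc] using h
  rw [hA, abs_mul, abs_of_pos (by positivity : 0 < 4 / π)]
  calc 4 / π * |∫ x in (-c)..c, x * v x| ≤ 4 / π * (π * c ^ 4 / 8 * M') := by gcongr
    _ = c ^ 4 / 2 * M' := by field_simp; ring

theorem stmt_6
    (c : ℝ) (hc : 0 < c)
    (V V' V'' : ℝ → ℝ)
    (hV1 : ∀ x ∈ Set.Icc (-c) c, HasDerivAt V (V' x) x)
    (hV2 : ∀ x ∈ Set.Icc (-c) c, HasDerivAt V' (V'' x) x)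
    (hV2c : ContinuousOn V'' (Set.Icc (-c) c))
    (hVnn : ∀ x ∈ Set.Icc (-c) c, 0 ≤ V x)
    (r v : ℝ → ℝ)
    (hr : ∀ x, r x = Real.sqrt (c ^ 2 - x ^ 2))
    (hv : ∀ x, v x = r x * (1 + V x))
    (M M' M'' : ℝ)
    (hM : IsLUB (V '' Set.Icc (-c) c) M)
    (hM' : IsLUB ((fun x => |V' x|) '' Set.Icc (-c) c) M')
    (hM'' : IsLUB ((fun x => |V'' x|) '' Set.Icc (-c) c) M'')
    (A : ℝ) (hA : A = (4 / Real.pi) * ∫ x in (-c)..c, x * v x)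
    :
    |A| ≤ c ^ 4 / 2 * M' :=
  stmt_6_general c hc V V' hV1 r v hr hv M' hM' A hA
end

section
/- For each choice of sign σ ∈ {+, −}: |a − (c/2)√(c · |m^σ|)| ≤ (c³/2)(M' + (c/4) M''). -/
open Real intervalIntegral MeasureTheory Set

lemma sqrt_cont (c : ℝ) : Continuous (fun x : ℝ => Real.sqrt (c ^ 2 - x ^ 2)) :=
  Real.continuous_sqrt.comp (continuous_const.sub (continuous_pow 2))

lemma rInt (c : ℝ) (hc : 0 < c) :
    ∫ x in (-c)..c, Real.sqrt (c ^ 2 - x ^ 2) = Real.pi * c ^ 2 / 2 := by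
  have h := intervalIntegral.integral_comp_mul_left
    (fun x => Real.sqrt (c ^ 2 - x ^ 2)) (a := -1) (b := 1) (ne_of_gt hc)
  have h2 : ∀ x : ℝ, Real.sqrt (c ^ 2 - (c * x) ^ 2) = c * Real.sqrt (1 - x ^ 2) := by
    intro x
    have : c ^ 2 - (c * x) ^ 2 = c ^ 2 * (1 - x ^ 2) := by ring
    rw [this, Real.sqrt_mul (sq_nonneg c), Real.sqrt_sq hc.le]
  simp only [h2] at h
  rw [intervalIntegral.integral_const_mul, integral_sqrt_one_sub_sq] at h
  have hc' : c ≠ 0 := ne_of_gt hc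
  rw [mul_one, mul_neg_one, smul_eq_mul] at h
  field_simp at h ⊢
  nlinarith [h]

lemma rxInt (c : ℝ) :
    ∫ x in (-c)..c, Real.sqrt (c ^ 2 - x ^ 2) * x = 0 := by
  have h := intervalIntegral.integral_comp_neg
    (fun x => Real.sqrt (c ^ 2 - x ^ 2) * x) (a := -c) (b := c)
  simp only [neg_neg] at h
  have h2 : ∀ x : ℝ, Real.sqrt (c ^ 2 - (-x) ^ 2) * (-x)
      = -(Real.sqrt (c ^ 2 - x ^ 2) * x) := by intro x; rw [neg_sq]; ring
  simp only [h2, intervalIntegral.integral_neg] at h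
  linarith

lemma main_est (c : ℝ) (hc : 0 < c) (V V' : ℝ → ℝ)
    (hV1 : ∀ x ∈ Set.Icc (-c) c, HasDerivAt V (V' x) x)
    (M' : ℝ) (hb : ∀ x ∈ Set.Icc (-c) c, |V' x| ≤ M')
    (ε : ℝ) (hε : ε = 1 ∨ ε = -1) :
    |∫ x in (-c)..c, Real.sqrt (c ^ 2 - x ^ 2) * (V x - V (ε * c))|
      ≤ M' * (Real.pi * c ^ 3 / 2) := by
  have hcc : (-c) ≤ c := by linarith
  have hpmem : ε * c ∈ Set.Icc (-c) c := by
    rcases hε with h | h <;> simp [h, hcc] <;> constructor <;> linarith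
  have hVcont : ContinuousOn V (Set.Icc (-c) c) := fun x hx =>
    (hV1 x hx).continuousAt.continuousWithinAt
  have hM'nn : 0 ≤ M' := le_trans (abs_nonneg _) (hb (ε * c) hpmem)
  -- pointwise bound via MVT
  have hmvt : ∀ x ∈ Set.Icc (-c) c, |V x - V (ε * c)| ≤ M' * (c - ε * x) := by
    intro x hx
    have := Convex.norm_image_sub_le_of_norm_hasDerivWithin_le
      (f := V) (f' := V') (s := Set.Icc (-c) c) (C := M')
      (fun y hy => (hV1 y hy).hasDerivWithinAt)
      (fun y hy => by simpa [Real.norm_eq_abs] using hb y hy)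
      (convex_Icc _ _) hpmem hx
    simp only [Real.norm_eq_abs] at this
    have habs : |x - ε * c| = c - ε * x := by
      rcases hε with h | h
      · subst h; rw [abs_of_nonpos (by simp; linarith [hx.2])]; ring
      · subst h; rw [abs_of_nonneg (by simp; linarith [hx.1])]; ring
    rw [habs] at this
    exact this
  have hint1 : IntervalIntegrable (fun x => Real.sqrt (c ^ 2 - x ^ 2) * (V x - V (ε * c)))
      MeasureTheory.volume (-c) c := by
    apply ContinuousOn.intervalIntegrable
    rw [Set.uIcc_of_le hcc]
    exact ((sqrt_cont c).continuousOn).mul (hVcont.sub continuousOn_const)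
  have hint2 : IntervalIntegrable (fun x => M' * (Real.sqrt (c ^ 2 - x ^ 2) * (c - ε * x)))
      MeasureTheory.volume (-c) c := by
    apply Continuous.intervalIntegrable
    exact continuous_const.mul ((sqrt_cont c).mul (continuous_const.sub
      (continuous_const.mul continuous_id)))
  have step1 : |∫ x in (-c)..c, Real.sqrt (c ^ 2 - x ^ 2) * (V x - V (ε * c))|
      ≤ ∫ x in (-c)..c, |Real.sqrt (c ^ 2 - x ^ 2) * (V x - V (ε * c))| :=
    intervalIntegral.abs_integral_le_integral_abs hcc
  have step2 : (∫ x in (-c)..c, |Real.sqrt (c ^ 2 - x ^ 2) * (V x - V (ε * c))|)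
      ≤ ∫ x in (-c)..c, M' * (Real.sqrt (c ^ 2 - x ^ 2) * (c - ε * x)) := by
    apply intervalIntegral.integral_mono_on hcc _ hint2
    · intro x hx
      rw [abs_mul, abs_of_nonneg (Real.sqrt_nonneg _)]
      calc Real.sqrt (c ^ 2 - x ^ 2) * |V x - V (ε * c)|
          ≤ Real.sqrt (c ^ 2 - x ^ 2) * (M' * (c - ε * x)) :=
            mul_le_mul_of_nonneg_left (hmvt x hx) (Real.sqrt_nonneg _)
        _ = M' * (Real.sqrt (c ^ 2 - x ^ 2) * (c - ε * x)) := by ring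
    · exact hint1.abs
  have step3 : (∫ x in (-c)..c, M' * (Real.sqrt (c ^ 2 - x ^ 2) * (c - ε * x)))
      = M' * (Real.pi * c ^ 3 / 2) := by
    have he : ∀ x : ℝ, M' * (Real.sqrt (c ^ 2 - x ^ 2) * (c - ε * x))
        = (M' * c) * Real.sqrt (c ^ 2 - x ^ 2)
          - (M' * ε) * (Real.sqrt (c ^ 2 - x ^ 2) * x) := by intro x; ring
    simp only [he]
    have hi1 : IntervalIntegrable (fun x => M' * c * Real.sqrt (c ^ 2 - x ^ 2))
        MeasureTheory.volume (-c) c :=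
      (continuous_const.mul (sqrt_cont c)).intervalIntegrable _ _
    have hi2 : IntervalIntegrable (fun x => M' * ε * (Real.sqrt (c ^ 2 - x ^ 2) * x))
        MeasureTheory.volume (-c) c :=
      (continuous_const.mul ((sqrt_cont c).mul continuous_id)).intervalIntegrable _ _
    rw [intervalIntegral.integral_sub hi1 hi2,
      intervalIntegral.integral_const_mul, intervalIntegral.integral_const_mul,
      rInt c hc, rxInt c]
    ring
  calc |∫ x in (-c)..c, Real.sqrt (c ^ 2 - x ^ 2) * (V x - V (ε * c))|
      ≤ ∫ x in (-c)..c, |Real.sqrt (c ^ 2 - x ^ 2) * (V x - V (ε * c))| := step1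
    _ ≤ ∫ x in (-c)..c, M' * (Real.sqrt (c ^ 2 - x ^ 2) * (c - ε * x)) := step2
    _ = M' * (Real.pi * c ^ 3 / 2) := step3

theorem stmt_8
    (c : ℝ) (hc : 0 < c)
    (V V' V'' : ℝ → ℝ)
    (hV1 : ∀ x ∈ Set.Icc (-c) c, HasDerivAt V (V' x) x)
    (hV2 : ∀ x ∈ Set.Icc (-c) c, HasDerivAt V' (V'' x) x)
    (hV2c : ContinuousOn V'' (Set.Icc (-c) c))
    (hVnn : ∀ x ∈ Set.Icc (-c) c, 0 ≤ V x)
    (r v : ℝ → ℝ)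
    (hr : ∀ x, r x = Real.sqrt (c ^ 2 - x ^ 2))
    (hv : ∀ x, v x = r x * (1 + V x))
    (M M' M'' : ℝ)
    (hM : IsLUB (V '' Set.Icc (-c) c) M)
    (hM' : IsLUB ((fun x => |V' x|) '' Set.Icc (-c) c) M')
    (hM'' : IsLUB ((fun x => |V'' x|) '' Set.Icc (-c) c) M'')
    (a : ℝ) (ha : a = (1 / Real.pi) * ∫ x in (-c)..c, v x)
    (mp mm : ℝ)
    (hmp : mp = c * (1 + V c) ^ 2)
    (hmm : mm = -(c * (1 + V (-c)) ^ 2))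
    :
    |a - c / 2 * Real.sqrt (c * |mp|)| ≤ c ^ 3 / 2 * (M' + c / 4 * M'') ∧
    |a - c / 2 * Real.sqrt (c * |mm|)| ≤ c ^ 3 / 2 * (M' + c / 4 * M'') := by
  have hcc : (-c) ≤ c := by linarith
  have hπ : (0:ℝ) < Real.pi := Real.pi_pos
  have h0mem : (0:ℝ) ∈ Set.Icc (-c) c := ⟨by linarith, by linarith⟩
  have hcmem : c ∈ Set.Icc (-c) c := ⟨hcc, le_refl c⟩
  have hmcmem : (-c) ∈ Set.Icc (-c) c := ⟨le_refl _, hcc⟩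
  have hM''nn : 0 ≤ M'' :=
    le_trans (abs_nonneg (V'' 0)) (hM''.1 ⟨0, h0mem, rfl⟩)
  have hbM' : ∀ x ∈ Set.Icc (-c) c, |V' x| ≤ M' := fun x hx => hM'.1 ⟨x, hx, rfl⟩
  have hVcont : ContinuousOn V (Set.Icc (-c) c) := fun x hx =>
    (hV1 x hx).continuousAt.continuousWithinAt
  -- the key estimates
  have key : ∀ ε : ℝ, ε = 1 ∨ ε = -1 →
      |a - c ^ 2 / 2 * (1 + V (ε * c))| ≤ c ^ 3 / 2 * (M' + c / 4 * M'') := by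
    intro ε hε
    -- split the integral
    have hsplit : ∀ x : ℝ, v x = Real.sqrt (c ^ 2 - x ^ 2) * (V x - V (ε * c))
        + (1 + V (ε * c)) * Real.sqrt (c ^ 2 - x ^ 2) := by
      intro x; rw [hv, hr]; ring
    have hint1 : IntervalIntegrable (fun x => Real.sqrt (c ^ 2 - x ^ 2) * (V x - V (ε * c)))
        MeasureTheory.volume (-c) c := by
      apply ContinuousOn.intervalIntegrable
      rw [Set.uIcc_of_le hcc]
      exact ((sqrt_cont c).continuousOn).mul (hVcont.sub continuousOn_const)
    have hint2 : IntervalIntegrable (fun x => (1 + V (ε * c)) * Real.sqrt (c ^ 2 - x ^ 2))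
        MeasureTheory.volume (-c) c :=
      (continuous_const.mul (sqrt_cont c)).intervalIntegrable _ _
    have hIv : (∫ x in (-c)..c, v x)
        = (∫ x in (-c)..c, Real.sqrt (c ^ 2 - x ^ 2) * (V x - V (ε * c)))
          + (1 + V (ε * c)) * (Real.pi * c ^ 2 / 2) := by
      simp only [hsplit]
      rw [intervalIntegral.integral_add hint1 hint2,
        intervalIntegral.integral_const_mul, rInt c hc]
    have hE := main_est c hc V V' hV1 M' hbM' ε hε
    have haeq : a - c ^ 2 / 2 * (1 + V (ε * c))
        = (1 / Real.pi) * ∫ x in (-c)..c, Real.sqrt (c ^ 2 - x ^ 2) * (V x - V (ε * c)) := by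
      rw [ha, hIv]
      field_simp
      ring
    rw [haeq, abs_mul, abs_of_nonneg (by positivity : (0:ℝ) ≤ 1 / Real.pi)]
    calc (1 / Real.pi) * |∫ x in (-c)..c, Real.sqrt (c ^ 2 - x ^ 2) * (V x - V (ε * c))|
        ≤ (1 / Real.pi) * (M' * (Real.pi * c ^ 3 / 2)) := by
          apply mul_le_mul_of_nonneg_left hE (by positivity)
      _ = c ^ 3 / 2 * M' := by field_simp
      _ ≤ c ^ 3 / 2 * (M' + c / 4 * M'') := by
          have h9 : 0 ≤ c ^ 3 / 2 * (c / 4 * M'') := by positivity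
          nlinarith [h9]
  constructor
  · have h1 : c * |mp| = (c * (1 + V c)) ^ 2 := by
      rw [hmp, abs_of_nonneg (by nlinarith [hVnn c hcmem])]; ring
    have h2 : Real.sqrt (c * |mp|) = c * (1 + V c) := by
      rw [h1, Real.sqrt_sq (by nlinarith [hVnn c hcmem])]
    have := key 1 (Or.inl rfl)
    rw [one_mul] at this
    have h3 : c / 2 * Real.sqrt (c * |mp|) = c ^ 2 / 2 * (1 + V c) := by rw [h2]; ring
    rw [h3]; exact this
  · have h1 : c * |mm| = (c * (1 + V (-c))) ^ 2 := by
      rw [hmm, abs_neg, abs_of_nonneg (by nlinarith [hVnn (-c) hmcmem])]; ring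
    have h2 : Real.sqrt (c * |mm|) = c * (1 + V (-c)) := by
      rw [h1, Real.sqrt_sq (by nlinarith [hVnn (-c) hmcmem])]
    have := key (-1) (Or.inr rfl)
    rw [neg_one_mul] at this
    have h3 : c / 2 * Real.sqrt (c * |mm|) = c ^ 2 / 2 * (1 + V (-c)) := by rw [h2]; ring
    rw [h3]; exact this
end

section
/- |b − c √((1 + V(0))/2)| ≤ c³ M'' / (8√2), where b = √a. -/
/-!
Expand `V` to first order at `0`. Against the semicircle weight `√(c² - x²)` the constant term
integrates to `π c² / 2 · (1 + V 0)`, the linear term to `0` by oddness, and the Taylor remainder,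
at most `M'' x² / 2`, contributes at most `M'' π c⁴ / 16` because `∫ x² √(c² - x²) = π c⁴ / 8`.
Hence `|a - b| ≤ M'' c⁴ / 16` for `b = c² (1 + V 0) / 2 ≥ c² / 2`, and
`|√a - √b| ≤ |a - b| / √b` finishes the estimate.
-/

open Real intervalIntegral Set

lemma integral_eq_zero_of_odd {f : ℝ → ℝ} (hf : ∀ x, f (-x) = -f x) (c : ℝ) :
    ∫ x in (-c)..c, f x = 0 := by
  have h := integral_comp_neg (a := -c) (b := c) f
  simp only [hf, integral_neg, neg_neg] at h
  linarith

lemma integral_sq_mul_sqrt_one_sub_sq :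
    ∫ x in (-1 : ℝ)..1, x ^ 2 * √(1 - x ^ 2) = π / 8 :=
  calc
    _ = ∫ x in sin (-(π / 2))..sin (π / 2), x ^ 2 * √(1 - x ^ 2) := by
          rw [sin_neg, sin_pi_div_two]
    _ = ∫ x in (-(π / 2))..(π / 2), sin x ^ 2 * √(1 - sin x ^ 2) * cos x :=
          (integral_comp_mul_deriv (fun x _ => hasDerivAt_sin x) continuousOn_cos
            (by fun_prop)).symm
    _ = ∫ x in (-(π / 2))..(π / 2), sin x ^ 2 * cos x ^ 2 := by
          refine integral_congr fun x hx => ?_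
          rw [uIcc_of_le (by linarith [pi_pos])] at hx
          rw [← cos_eq_sqrt_one_sub_sin_sq hx.1 hx.2]
          ring
    _ = π / 8 := by
          rw [integral_sin_sq_mul_cos_sq, show 4 * (π / 2) = 2 * π by ring,
            show 4 * -(π / 2) = -(2 * π) by ring, sin_neg, sin_two_pi]
          ring

lemma integral_mul_sqrt_sq_sub_sq_eq {c : ℝ} (hc : 0 ≤ c) (g : ℝ → ℝ) :
    ∫ x in (-c)..c, g x * √(c ^ 2 - x ^ 2) =
      c ^ 2 * ∫ u in (-1 : ℝ)..1, g (c * u) * √(1 - u ^ 2) := by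
  have hscale : ∀ u, √(c ^ 2 - (c * u) ^ 2) = c * √(1 - u ^ 2) := fun u => by
    rw [show c ^ 2 - (c * u) ^ 2 = c ^ 2 * (1 - u ^ 2) by ring, sqrt_mul (sq_nonneg c),
      sqrt_sq hc]
  have h := smul_integral_comp_mul_left (a := -1) (b := 1) (fun x => g x * √(c ^ 2 - x ^ 2)) c
  simp only [mul_neg, mul_one, hscale, smul_eq_mul] at h
  rw [← h]
  simp only [mul_left_comm (g _) c, integral_const_mul]
  ring

lemma integral_sqrt_sq_sub_sq {c : ℝ} (hc : 0 ≤ c) :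
    ∫ x in (-c)..c, √(c ^ 2 - x ^ 2) = π * c ^ 2 / 2 := by
  have h := integral_mul_sqrt_sq_sub_sq_eq hc fun _ => 1
  simp only [one_mul] at h
  rw [h, integral_sqrt_one_sub_sq]
  ring

lemma integral_sq_mul_sqrt_sq_sub_sq {c : ℝ} (hc : 0 ≤ c) :
    ∫ x in (-c)..c, x ^ 2 * √(c ^ 2 - x ^ 2) = π * c ^ 4 / 8 := by
  rw [integral_mul_sqrt_sq_sub_sq_eq hc]
  simp only [mul_pow, mul_assoc]
  rw [integral_const_mul, integral_sq_mul_sqrt_one_sub_sq]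
  ring

lemma integral_mul_sqrt_sq_sub_sq (c : ℝ) :
    ∫ x in (-c)..c, x * √(c ^ 2 - x ^ 2) = 0 :=
  integral_eq_zero_of_odd (fun x => by rw [neg_sq, neg_mul]) c

lemma abs_sub_sub_mul_le_of_abs_deriv2_le {f f' f'' : ℝ → ℝ} {a x K : ℝ}
    (hf : ∀ t ∈ uIcc a x, HasDerivAt f (f' t) t)
    (hf' : ∀ t ∈ uIcc a x, HasDerivAt f' (f'' t) t) (hK : ∀ t ∈ uIcc a x, |f'' t| ≤ K) :
    |f x - f a - f' a * (x - a)| ≤ K / 2 * (x - a) ^ 2 := by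
  have hlip : ∀ t ∈ uIcc a x, |f' t - f' a| ≤ K * |t - a| := fun t ht => by
    simpa only [norm_eq_abs] using (convex_uIcc a x).norm_image_sub_le_of_norm_hasDerivWithin_le
      (fun t ht => (hf' t ht).hasDerivWithinAt) (fun t ht => hK t ht) left_mem_uIcc ht
  have hcont : ContinuousOn f' (uIcc a x) := fun t ht =>
    (hf' t ht).continuousAt.continuousWithinAt
  have hftc : f x - f a - f' a * (x - a) = ∫ t in a..x, (f' t - f' a) := by
    rw [integral_sub hcont.intervalIntegrable intervalIntegrable_const,
      integral_eq_sub_of_hasDerivAt hf hcont.intervalIntegrable, integral_const, smul_eq_mul]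
    ring
  rw [hftc]
  rcases le_total a x with hax | hxa
  · calc |∫ t in a..x, (f' t - f' a)| ≤ ∫ t in a..x, K * (t - a) := by
          rw [← norm_eq_abs]
          refine norm_integral_le_of_norm_le hax (Filter.Eventually.of_forall fun t ht => ?_)
            ((by fun_prop : Continuous fun t => K * (t - a)).intervalIntegrable _ _)
          rw [norm_eq_abs, ← abs_of_nonneg (sub_nonneg.2 ht.1.le)]
          exact hlip t (Icc_subset_uIcc (Ioc_subset_Icc_self ht))
      _ = K / 2 * (x - a) ^ 2 := by
          simp only [integral_const_mul,
            integral_sub intervalIntegrable_id intervalIntegrable_const,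
            integral_id, integral_const, smul_eq_mul]
          ring
  · rw [integral_symm, abs_neg]
    calc |∫ t in x..a, (f' t - f' a)| ≤ ∫ t in x..a, K * (a - t) := by
          rw [← norm_eq_abs]
          refine norm_integral_le_of_norm_le hxa (Filter.Eventually.of_forall fun t ht => ?_)
            ((by fun_prop : Continuous fun t => K * (a - t)).intervalIntegrable _ _)
          rw [norm_eq_abs, ← abs_of_nonneg (sub_nonneg.2 ht.2), abs_sub_comm a]
          exact hlip t (Icc_subset_uIcc' (Ioc_subset_Icc_self ht))
      _ = K / 2 * (x - a) ^ 2 := by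
          simp only [integral_const_mul,
            integral_sub intervalIntegrable_const intervalIntegrable_id,
            integral_id, integral_const, smul_eq_mul]
          ring

lemma abs_integral_mul_sqrt_sq_sub_sq_sub_le {f : ℝ → ℝ} {c d K : ℝ} (hc : 0 ≤ c)
    (hf : IntervalIntegrable f MeasureTheory.volume (-c) c)
    (hT : ∀ x ∈ Icc (-c) c, |f x - f 0 - d * x| ≤ K * x ^ 2) :
    |(∫ x in (-c)..c, f x * √(c ^ 2 - x ^ 2)) - π * c ^ 2 / 2 * f 0| ≤ K * π * c ^ 4 / 8 := by
  have hr : Continuous fun x : ℝ => √(c ^ 2 - x ^ 2) := by fun_prop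
  have hpoly : ∫ x in (-c)..c, (f 0 + d * x) * √(c ^ 2 - x ^ 2) = π * c ^ 2 / 2 * f 0 := by
    simp only [add_mul, mul_assoc]
    rw [integral_add ((hr.const_mul _).intervalIntegrable _ _)
        ((by fun_prop : Continuous fun x => d * (x * √(c ^ 2 - x ^ 2))).intervalIntegrable _ _),
      integral_const_mul, integral_const_mul, integral_sqrt_sq_sub_sq hc,
      integral_mul_sqrt_sq_sub_sq]
    ring
  have hfr : IntervalIntegrable (fun x => f x * √(c ^ 2 - x ^ 2)) MeasureTheory.volume (-c) c :=
    hf.mul_continuousOn hr.continuousOn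
  rw [← hpoly, ← integral_sub hfr
    ((by fun_prop : Continuous fun x => (f 0 + d * x) * √(c ^ 2 - x ^ 2)).intervalIntegrable _ _)]
  calc |∫ x in (-c)..c, (f x * √(c ^ 2 - x ^ 2) - (f 0 + d * x) * √(c ^ 2 - x ^ 2))|
      ≤ ∫ x in (-c)..c, K * (x ^ 2 * √(c ^ 2 - x ^ 2)) := by
        rw [← norm_eq_abs]
        refine norm_integral_le_of_norm_le (by linarith)
          (Filter.Eventually.of_forall fun x hx => ?_) ((by fun_prop : Continuous fun x =>
            K * (x ^ 2 * √(c ^ 2 - x ^ 2))).intervalIntegrable _ _)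
        rw [norm_eq_abs, ← sub_mul, abs_mul, abs_of_nonneg (sqrt_nonneg _), ← mul_assoc,
          ← sub_sub]
        exact mul_le_mul_of_nonneg_right (hT x (Ioc_subset_Icc_self hx)) (sqrt_nonneg _)
    _ = K * π * c ^ 4 / 8 := by
        rw [integral_const_mul, integral_sq_mul_sqrt_sq_sub_sq hc]
        ring

lemma abs_integral_mul_sqrt_sq_sub_sq_sub_le_of_abs_deriv2_le {f f' f'' : ℝ → ℝ} {c K : ℝ}
    (hc : 0 ≤ c) (hf : ∀ x ∈ Icc (-c) c, HasDerivAt f (f' x) x)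
    (hf' : ∀ x ∈ Icc (-c) c, HasDerivAt f' (f'' x) x) (hK : ∀ x ∈ Icc (-c) c, |f'' x| ≤ K) :
    |(∫ x in (-c)..c, f x * √(c ^ 2 - x ^ 2)) - π * c ^ 2 / 2 * f 0| ≤ K * π * c ^ 4 / 16 := by
  have h0 : (0 : ℝ) ∈ Icc (-c) c := ⟨by linarith, hc⟩
  have htaylor : ∀ x ∈ Icc (-c) c, |f x - f 0 - f' 0 * x| ≤ K / 2 * x ^ 2 := fun x hx => by
    have hsub : uIcc 0 x ⊆ Icc (-c) c := uIcc_subset_Icc h0 hx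
    simpa using abs_sub_sub_mul_le_of_abs_deriv2_le (fun t ht => hf t (hsub ht))
      (fun t ht => hf' t (hsub ht)) (fun t ht => hK t (hsub ht))
  have hint : IntervalIntegrable f MeasureTheory.volume (-c) c :=
    ContinuousOn.intervalIntegrable_of_Icc (by linarith)
      fun t ht => (hf t ht).continuousAt.continuousWithinAt
  calc _ ≤ K / 2 * π * c ^ 4 / 8 := abs_integral_mul_sqrt_sq_sub_sq_sub_le hc hint htaylor
    _ = K * π * c ^ 4 / 16 := by ring

lemma abs_sqrt_sub_sqrt_le {x y : ℝ} (hy : 0 < y) : |√x - √y| ≤ |x - y| / √y := by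
  have hsy : 0 < √y := sqrt_pos.2 hy
  rw [le_div_iff₀ hsy]
  rcases le_total 0 x with hx | hx
  · calc |√x - √y| * √y ≤ |√x - √y| * (√x + √y) := by
          gcongr; exact le_add_of_nonneg_left (sqrt_nonneg x)
      _ = |x - y| := by
          rw [← abs_of_nonneg (by positivity : 0 ≤ √x + √y), ← abs_mul]
          congr 1
          linear_combination sq_sqrt hx - sq_sqrt hy.le
  · rw [sqrt_eq_zero'.2 hx, zero_sub, abs_neg, abs_of_pos hsy, mul_self_sqrt hy.le,
      abs_of_nonpos (by linarith)]
    linarith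

theorem stmt_9_general
    (c : ℝ) (hc : 0 < c)
    (V V' V'' : ℝ → ℝ)
    (hV1 : ∀ x ∈ Set.Icc (-c) c, HasDerivAt V (V' x) x)
    (hV2 : ∀ x ∈ Set.Icc (-c) c, HasDerivAt V' (V'' x) x)
    (hVnn : ∀ x ∈ Set.Icc (-c) c, 0 ≤ V x)
    (r v : ℝ → ℝ)
    (hr : ∀ x, r x = Real.sqrt (c ^ 2 - x ^ 2))
    (hv : ∀ x, v x = r x * (1 + V x))
    (M'' : ℝ)
    (hM'' : IsLUB ((fun x => |V'' x|) '' Set.Icc (-c) c) M'')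
    (a : ℝ) (ha : a = (1 / Real.pi) * ∫ x in (-c)..c, v x)
    :
    |Real.sqrt a - c * Real.sqrt ((1 + V 0) / 2)| ≤ c ^ 3 * M'' / (8 * Real.sqrt 2) := by
  have h0 : (0 : ℝ) ∈ Icc (-c) c := ⟨by linarith, hc.le⟩
  have hV''le : ∀ x ∈ Icc (-c) c, |V'' x| ≤ M'' := fun x hx => hM''.1 ⟨x, hx, rfl⟩
  have hM''0 : 0 ≤ M'' := (abs_nonneg _).trans (hV''le 0 h0)
  set b := c ^ 2 * (1 + V 0) / 2
  have hab : |a - b| ≤ M'' * c ^ 4 / 16 := by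
    have hquad := abs_integral_mul_sqrt_sq_sub_sq_sub_le_of_abs_deriv2_le hc.le
      (fun x hx => (hV1 x hx).const_add 1) hV2 hV''le
    have hdiff : a - b =
        ((∫ x in (-c)..c, (1 + V x) * √(c ^ 2 - x ^ 2)) - π * c ^ 2 / 2 * (1 + V 0)) / π := by
      simp only [ha, hv, hr, mul_comm (√_)]
      field_simp
      ring
    rw [hdiff, abs_div, abs_of_pos pi_pos, div_le_iff₀ pi_pos]
    linarith
  have hb : c ^ 2 / 2 ≤ b := by
    have := hVnn 0 h0
    simp only [b]
    nlinarith [sq_nonneg c]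
  have hb0 : 0 < b := (by positivity : (0 : ℝ) < c ^ 2 / 2).trans_le hb
  have hsqrt : c * √((1 + V 0) / 2) = √b := by
    rw [show b = c ^ 2 * ((1 + V 0) / 2) by ring, sqrt_mul (sq_nonneg c), sqrt_sq hc.le]
  calc |√a - c * √((1 + V 0) / 2)| = |√a - √b| := by rw [hsqrt]
    _ ≤ |a - b| / √b := abs_sqrt_sub_sqrt_le hb0
    _ ≤ (M'' * c ^ 4 / 16) / √(c ^ 2 / 2) :=
      div_le_div₀ (by positivity) hab (by positivity) (sqrt_le_sqrt hb)
    _ = c ^ 3 * M'' / (8 * √2) := by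
      rw [sqrt_div' _ zero_le_two, sqrt_sq hc.le]
      field_simp
      rw [sq_sqrt zero_le_two]
      ring

theorem stmt_9
    (c : ℝ) (hc : 0 < c)
    (V V' V'' : ℝ → ℝ)
    (hV1 : ∀ x ∈ Set.Icc (-c) c, HasDerivAt V (V' x) x)
    (hV2 : ∀ x ∈ Set.Icc (-c) c, HasDerivAt V' (V'' x) x)
    (hV2c : ContinuousOn V'' (Set.Icc (-c) c))
    (hVnn : ∀ x ∈ Set.Icc (-c) c, 0 ≤ V x)
    (r v : ℝ → ℝ)
    (hr : ∀ x, r x = Real.sqrt (c ^ 2 - x ^ 2))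
    (hv : ∀ x, v x = r x * (1 + V x))
    (M M' M'' : ℝ)
    (hM : IsLUB (V '' Set.Icc (-c) c) M)
    (hM' : IsLUB ((fun x => |V' x|) '' Set.Icc (-c) c) M')
    (hM'' : IsLUB ((fun x => |V'' x|) '' Set.Icc (-c) c) M'')
    (a : ℝ) (ha : a = (1 / Real.pi) * ∫ x in (-c)..c, v x)
    :
    |Real.sqrt a - c * Real.sqrt ((1 + V 0) / 2)| ≤ c ^ 3 * M'' / (8 * Real.sqrt 2) :=
  stmt_9_general c hc V V' V'' hV1 hV2 hVnn r v hr hv M'' hM'' a ha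
end

section
/- For each choice of sign σ ∈ {+, −}, setting h^σ = √(c |m^σ|): |h − h^σ| ≤ 2c² ( M' + (V₀')² √(c |m^σ|) / (4(1 + V₀)²) ). -/
/-!
At the interior maximum `z₀` of `v = r (1 + V)` the derivative vanishes, which gives
`r₀² V'(z₀) = z₀ (1 + V(z₀))`, i.e. `V'(z₀)² / (1 + V(z₀))² = z₀² / r₀⁴`. Writing `w = 1 + V(±c)`,
`v(z₀) - c w = r₀ (V(z₀) - V(±c)) - w (c - r₀)`. The first term is at most `2c² M'` by the mean value
theorem, and `c - r₀ = z₀² / (c + r₀) ≤ c³ z₀² / (2 r₀⁴)` because `2 r₀⁴ ≤ c³ (c + r₀)`.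
-/

open Set

lemma abs_sub_le_mul_of_hasDerivAt {a b C : ℝ} {f f' : ℝ → ℝ}
    (hf : ∀ x ∈ Icc a b, HasDerivAt f (f' x) x) (hC : ∀ x ∈ Icc a b, |f' x| ≤ C)
    {x y : ℝ} (hx : x ∈ Icc a b) (hy : y ∈ Icc a b) :
    |f x - f y| ≤ C * (b - a) := by
  have hlip : ‖f x - f y‖ ≤ C * ‖x - y‖ :=
    (convex_Icc a b).norm_image_sub_le_of_norm_hasDerivWithin_le
      (fun t ht => (hf t ht).hasDerivWithinAt) (fun t ht => hC t ht) hy hx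
  have hC0 : 0 ≤ C := (abs_nonneg _).trans (hC x hx)
  have hxy : |x - y| ≤ b - a := abs_sub_le_iff.2 ⟨by linarith [hx.2, hy.1], by linarith [hx.1, hy.2]⟩
  exact hlip.trans (mul_le_mul_of_nonneg_left hxy hC0)

lemma sq_sub_sq_mul_deriv_eq_of_isLocalMax {c z g' : ℝ} {g : ℝ → ℝ} (hz : z ∈ Ioo (-c) c)
    (hg : HasDerivAt g g' z) (hmax : IsLocalMax (fun x => √(c ^ 2 - x ^ 2) * g x) z) :
    (c ^ 2 - z ^ 2) * g' = z * g z := by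
  have hpos : 0 < c ^ 2 - z ^ 2 := by nlinarith [hz.1, hz.2]
  set r := √(c ^ 2 - z ^ 2)
  have hr : 0 < r := Real.sqrt_pos.2 hpos
  have hr2 : r ^ 2 = c ^ 2 - z ^ 2 := Real.sq_sqrt hpos.le
  have hsqrt : HasDerivAt (fun x => √(c ^ 2 - x ^ 2)) (-z / r) z := by
    convert ((hasDerivAt_pow 2 z).const_sub (c ^ 2)).sqrt hpos.ne' using 1
    field_simp
    ring
  have hzero : -z / r * g z + r * g' = 0 := hmax.hasDerivAt_eq_zero (hsqrt.mul hg)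
  field_simp at hzero
  rw [← hr2]
  linarith

lemma sub_le_cube_mul_sq_sub_sq_div {c r : ℝ} (hr : 0 < r) (hrc : r ≤ c) :
    c - r ≤ c ^ 3 * (c ^ 2 - r ^ 2) / (2 * r ^ 4) := by
  have hquartic : 2 * r ^ 4 ≤ c ^ 3 * (c + r) := by
    have h4 : r ^ 4 ≤ c ^ 4 := pow_le_pow_left₀ hr.le hrc 4
    have h3 : r ^ 3 ≤ c ^ 3 := pow_le_pow_left₀ hr.le hrc 3
    nlinarith [mul_le_mul_of_nonneg_left h3 hr.le]
  rw [le_div_iff₀ (by positivity)]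
  calc (c - r) * (2 * r ^ 4) ≤ (c - r) * (c ^ 3 * (c + r)) :=
        mul_le_mul_of_nonneg_left hquartic (by linarith)
    _ = c ^ 3 * (c ^ 2 - r ^ 2) := by ring

lemma abs_mul_sub_mul_le_of_critical {c r z u w D L : ℝ} (hr : 0 < r) (hrc : r ≤ c)
    (hz : z ^ 2 = c ^ 2 - r ^ 2) (hu : 0 < u) (hw : 0 ≤ w) (hcrit : r ^ 2 * D = z * u)
    (huw : |u - w| ≤ 2 * c * L) :
    |r * u - c * w| ≤ 2 * c ^ 2 * (L + D ^ 2 * (c * w) / (4 * u ^ 2)) := by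
  have hslope : D ^ 2 / u ^ 2 = z ^ 2 / r ^ 4 := by
    rw [div_eq_div_iff (by positivity) (by positivity)]
    linear_combination (r ^ 2 * D + z * u) * hcrit
  have hcurv : w * (c - r) ≤ 2 * c ^ 2 * (D ^ 2 * (c * w) / (4 * u ^ 2)) := by
    have hrw : 2 * c ^ 2 * (D ^ 2 * (c * w) / (4 * u ^ 2)) = w * (c ^ 3 * z ^ 2 / (2 * r ^ 4)) := by
      rw [show D ^ 2 * (c * w) / (4 * u ^ 2) = c * w / 4 * (D ^ 2 / u ^ 2) by ring, hslope]
      ring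
    rw [hrw, hz]
    exact mul_le_mul_of_nonneg_left (sub_le_cube_mul_sq_sub_sq_div hr hrc) hw
  have hlin : |r * (u - w)| ≤ c * (2 * c * L) := by
    rw [abs_mul, abs_of_pos hr]
    exact mul_le_mul hrc huw (abs_nonneg _) (hr.le.trans hrc)
  have hsplit : r * u - c * w = r * (u - w) - w * (c - r) := by ring
  have hcr : 0 ≤ w * (c - r) := mul_nonneg hw (by linarith)
  rw [hsplit, abs_le]
  constructor <;> nlinarith [abs_le.1 hlin]

lemma sqrt_mul_abs_mul_sq {c a : ℝ} (hc : 0 ≤ c) (ha : 0 ≤ a) :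
    √(c * |c * a ^ 2|) = c * a := by
  rw [abs_of_nonneg (by positivity), show c * (c * a ^ 2) = (c * a) ^ 2 by ring,
    Real.sqrt_sq (by positivity)]

theorem stmt_12_general
    (c : ℝ) (hc : 0 < c)
    (V V' : ℝ → ℝ)
    (hV1 : ∀ x ∈ Set.Icc (-c) c, HasDerivAt V (V' x) x)
    (hVnn : ∀ x ∈ Set.Icc (-c) c, 0 ≤ V x)
    (r v : ℝ → ℝ)
    (hr : ∀ x, r x = Real.sqrt (c ^ 2 - x ^ 2))
    (hv : ∀ x, v x = r x * (1 + V x))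
    (z₀ : ℝ) (hz₀ : z₀ ∈ Set.Ioo (-c) c)
    (hmax : ∀ x ∈ Set.Icc (-c) c, v x ≤ v z₀)
    (M' : ℝ)
    (hM' : IsLUB ((fun x => |V' x|) '' Set.Icc (-c) c) M')
    (mp mm : ℝ)
    (hmp : mp = c * (1 + V c) ^ 2)
    (hmm : mm = -(c * (1 + V (-c)) ^ 2))
    :
    |v z₀ - Real.sqrt (c * |mp|)| ≤ 2 * c ^ 2 * (M' + (V' z₀) ^ 2 * Real.sqrt (c * |mp|) / (4 * (1 + V z₀) ^ 2)) ∧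
    |v z₀ - Real.sqrt (c * |mm|)| ≤ 2 * c ^ 2 * (M' + (V' z₀) ^ 2 * Real.sqrt (c * |mm|) / (4 * (1 + V z₀) ^ 2)) := by
  have hz₀Icc : z₀ ∈ Icc (-c) c := Ioo_subset_Icc_self hz₀
  have hcIcc : c ∈ Icc (-c) c := ⟨by linarith, le_rfl⟩
  have hncIcc : -c ∈ Icc (-c) c := ⟨le_rfl, by linarith⟩
  have hloc : IsLocalMax (fun x => √(c ^ 2 - x ^ 2) * (1 + V x)) z₀ :=
    Filter.eventually_of_mem (Icc_mem_nhds hz₀.1 hz₀.2) fun x hx => by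
      simpa [hv, hr] using hmax x hx
  have hcrit := sq_sub_sq_mul_deriv_eq_of_isLocalMax hz₀ ((hV1 z₀ hz₀Icc).const_add 1) hloc
  have hpos : 0 < c ^ 2 - z₀ ^ 2 := by nlinarith [hz₀.1, hz₀.2]
  have hendpoint : ∀ e ∈ Icc (-c) c, |v z₀ - c * (1 + V e)| ≤
      2 * c ^ 2 * (M' + V' z₀ ^ 2 * (c * (1 + V e)) / (4 * (1 + V z₀) ^ 2)) := fun e he => by
    rw [hv, hr]
    refine abs_mul_sub_mul_le_of_critical (z := z₀) (Real.sqrt_pos.2 hpos) ?_ ?_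
      (by linarith [hVnn z₀ hz₀Icc]) (by linarith [hVnn e he]) ?_ ?_
    · exact Real.sqrt_le_iff.2 ⟨hc.le, by nlinarith⟩
    · rw [Real.sq_sqrt hpos.le]; ring
    · rwa [Real.sq_sqrt hpos.le]
    · have hosc := abs_sub_le_mul_of_hasDerivAt hV1 (fun x hx => hM'.1 ⟨x, hx, rfl⟩) hz₀Icc he
      rw [add_sub_add_left_eq_sub]
      linarith
  rw [hmp, hmm, abs_neg, sqrt_mul_abs_mul_sq hc.le (by linarith [hVnn c hcIcc]),
    sqrt_mul_abs_mul_sq hc.le (by linarith [hVnn (-c) hncIcc])]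
  exact ⟨hendpoint c hcIcc, hendpoint (-c) hncIcc⟩

theorem stmt_12
    (c : ℝ) (hc : 0 < c)
    (V V' V'' : ℝ → ℝ)
    (hV1 : ∀ x ∈ Set.Icc (-c) c, HasDerivAt V (V' x) x)
    (hV2 : ∀ x ∈ Set.Icc (-c) c, HasDerivAt V' (V'' x) x)
    (hV2c : ContinuousOn V'' (Set.Icc (-c) c))
    (hVnn : ∀ x ∈ Set.Icc (-c) c, 0 ≤ V x)
    (r v : ℝ → ℝ)
    (hr : ∀ x, r x = Real.sqrt (c ^ 2 - x ^ 2))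
    (hv : ∀ x, v x = r x * (1 + V x))
    (z₀ : ℝ) (hz₀ : z₀ ∈ Set.Ioo (-c) c)
    (hmax : ∀ x ∈ Set.Icc (-c) c, v x ≤ v z₀)
    (M M' M'' : ℝ)
    (hM : IsLUB (V '' Set.Icc (-c) c) M)
    (hM' : IsLUB ((fun x => |V' x|) '' Set.Icc (-c) c) M')
    (hM'' : IsLUB ((fun x => |V'' x|) '' Set.Icc (-c) c) M'')
    (mp mm : ℝ)
    (hmp : mp = c * (1 + V c) ^ 2)
    (hmm : mm = -(c * (1 + V (-c)) ^ 2))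
    :
    |v z₀ - Real.sqrt (c * |mp|)| ≤ 2 * c ^ 2 * (M' + (V' z₀) ^ 2 * Real.sqrt (c * |mp|) / (4 * (1 + V z₀) ^ 2)) ∧
    |v z₀ - Real.sqrt (c * |mm|)| ≤ 2 * c ^ 2 * (M' + (V' z₀) ^ 2 * Real.sqrt (c * |mm|) / (4 * (1 + V z₀) ^ 2)) :=
  stmt_12_general c hc V V' hV1 hVnn r v hr hv z₀ hz₀ hmax M' hM' mp mm hmp hmm
end

section
/- Assume v is bounded and set h₊ = sup_{t∈ℝ} v(t). Then for every n ∈ ℤ and every x ∈ gₙ, Vₙ(x) ≤ 2 h₊ / (π ρₙ). -/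
/-!
Every point `t` of `g ∖ gₙ` lies at distance at least `ρₙ` from the closure `[zₙ⁻, zₙ⁺]`, hence
on one of the two tails `t ≤ zₙ⁻ - ρₙ`, `zₙ⁺ + ρₙ ≤ t`. On the left tail both `|t - x|` and
`vₙ(t)` are at least `zₙ⁻ - t` (symmetrically on the right), so the integrand is at most
`h₊ (zₙ⁻ - t)⁻²`, and each tail of `s⁻²` beyond `ρₙ` has integral `1/ρₙ`.
-/

open MeasureTheory Set Filter

lemma sInf_image2_dist_le {α : Type*} [PseudoMetricSpace α] {s t : Set α} {x y : α}
    (hx : x ∈ s) (hy : y ∈ t) : sInf (image2 dist s t) ≤ dist x y :=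
  csInf_le ⟨0, by rintro _ ⟨_, -, _, -, rfl⟩; exact dist_nonneg⟩ (mem_image2_of_mem hx hy)

lemma le_sub_or_add_le_of_forall_le_abs_sub {a b r t : ℝ} (hab : a < b) (ht : t ∉ Ioo a b)
    (h : ∀ x ∈ Ioo a b, r ≤ |x - t|) : t ≤ a - r ∨ b + r ≤ t := by
  have hIcc : Icc a b ⊆ {x | r ≤ |x - t|} := by
    rw [← closure_Ioo hab.ne]
    exact (isClosed_le continuous_const (by fun_prop)).closure_subset_iff.mpr h
  rcases le_or_gt t a with hta | hat
  · have ha : r ≤ |a - t| := hIcc ⟨le_rfl, hab.le⟩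
    rw [abs_of_nonneg (by linarith)] at ha
    left; linarith
  · have htb : b ≤ t := not_lt.mp fun htb => ht ⟨hat, htb⟩
    have hb : r ≤ |b - t| := hIcc ⟨hab.le, le_rfl⟩
    rw [abs_of_nonpos (by linarith)] at hb
    right; linarith

lemma sq_le_mul_sqrt_mul {d p q r : ℝ} (hd : 0 ≤ d) (hp : d ≤ p) (hq : d ≤ q) (hr : d ≤ r) :
    d ^ 2 ≤ p * √(q * r) := by
  have hsqrt : d ≤ √(q * r) := by
    calc d = √(d * d) := (Real.sqrt_mul_self hd).symm
      _ ≤ √(q * r) := Real.sqrt_le_sqrt (mul_le_mul hq hr hd (hd.trans hq))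
  rw [sq]
  exact mul_le_mul hp hsqrt hd (hd.trans hp)

noncomputable def invSqTail (r : ℝ) : ℝ → ℝ := (Ici r).indicator fun s => (s ^ 2)⁻¹

lemma invSqTail_nonneg (r s : ℝ) : 0 ≤ invSqTail r s :=
  indicator_nonneg (fun _ _ => inv_nonneg.mpr (sq_nonneg _)) s

lemma hasDerivAt_neg_inv {s : ℝ} (hs : s ≠ 0) : HasDerivAt (fun s : ℝ => -s⁻¹) (s ^ 2)⁻¹ s :=
  neg_neg ((s ^ 2)⁻¹) ▸ (hasDerivAt_inv hs).neg

lemma tendsto_neg_inv_atTop : Tendsto (fun s : ℝ => -s⁻¹) atTop (nhds 0) := by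
  simpa using (tendsto_inv_atTop_zero (𝕜 := ℝ)).neg

lemma integrable_invSqTail {r : ℝ} (hr : 0 < r) : Integrable (invSqTail r) := by
  refine (integrable_indicator_iff measurableSet_Ici).mpr ?_
  refine Iff.mpr integrableOn_Ici_iff_integrableOn_Ioi ?_
  exact integrableOn_Ioi_deriv_of_nonneg' (fun s hs => hasDerivAt_neg_inv (hr.trans_le hs).ne')
    (fun s _ => inv_nonneg.mpr (sq_nonneg s)) tendsto_neg_inv_atTop

lemma integral_invSqTail {r : ℝ} (hr : 0 < r) : ∫ s, invSqTail r s = r⁻¹ := by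
  have hint := (integrable_indicator_iff measurableSet_Ici).mp (integrable_invSqTail hr)
  rw [invSqTail, integral_indicator measurableSet_Ici, integral_Ici_eq_integral_Ioi,
    integral_Ioi_of_hasDerivAt_of_tendsto' (fun s hs => hasDerivAt_neg_inv (hr.trans_le hs).ne')
      (Iff.mp integrableOn_Ici_iff_integrableOn_Ioi hint) tendsto_neg_inv_atTop]
  ring

lemma div_abs_sub_mul_sqrt_le {a b r x t u h : ℝ} (hx : x ∈ Icc a b)
    (ht : t ≤ a - r ∨ b + r ≤ t) (hr : 0 < r) (hu₀ : 0 ≤ u) (hu : u ≤ h) :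
    u / (|t - x| * √(|t - a| * |t - b|)) ≤ h * (invSqTail r (a - t) + invSqTail r (t - b)) := by
  obtain ⟨hax, hxb⟩ := hx
  have hh : 0 ≤ h := hu₀.trans hu
  rcases ht with ht | ht
  · have hd : (a - t) ^ 2 ≤ |t - x| * √(|t - a| * |t - b|) :=
      sq_le_mul_sqrt_mul (by linarith) (le_abs.2 (.inr (by linarith)))
        (le_abs.2 (.inr (by linarith))) (le_abs.2 (.inr (by linarith)))
    have hK : invSqTail r (a - t) = ((a - t) ^ 2)⁻¹ :=
      indicator_of_mem (show a - t ∈ Ici r from by simp only [mem_Ici]; linarith) _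
    calc u / (|t - x| * √(|t - a| * |t - b|)) ≤ h / (a - t) ^ 2 :=
          div_le_div₀ hh hu (pow_pos (by linarith) 2) hd
      _ ≤ h * (invSqTail r (a - t) + invSqTail r (t - b)) := by
          rw [hK, div_eq_mul_inv]
          exact mul_le_mul_of_nonneg_left (le_add_of_nonneg_right (invSqTail_nonneg _ _)) hh
  · have hd : (t - b) ^ 2 ≤ |t - x| * √(|t - a| * |t - b|) :=
      sq_le_mul_sqrt_mul (by linarith) (le_abs.2 (.inl (by linarith)))
        (le_abs.2 (.inl (by linarith))) (le_abs.2 (.inl (by linarith)))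
    have hK : invSqTail r (t - b) = ((t - b) ^ 2)⁻¹ :=
      indicator_of_mem (show t - b ∈ Ici r from by simp only [mem_Ici]; linarith) _
    calc u / (|t - x| * √(|t - a| * |t - b|)) ≤ h / (t - b) ^ 2 :=
          div_le_div₀ hh hu (pow_pos (by linarith) 2) hd
      _ ≤ h * (invSqTail r (a - t) + invSqTail r (t - b)) := by
          rw [hK, div_eq_mul_inv]
          exact mul_le_mul_of_nonneg_left (le_add_of_nonneg_left (invSqTail_nonneg _ _)) hh

lemma setIntegral_div_abs_sub_mul_sqrt_le {a b r x h : ℝ} {u : ℝ → ℝ} {S : Set ℝ}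
    (hS : MeasurableSet S) (hx : x ∈ Icc a b) (htail : ∀ t ∈ S, t ≤ a - r ∨ b + r ≤ t)
    (hr : 0 < r) (hu₀ : ∀ t, 0 ≤ u t) (hu : ∀ t, u t ≤ h) :
    ∫ t in S, u t / (|t - x| * √(|t - a| * |t - b|)) ≤ 2 * h / r := by
  set M : ℝ → ℝ := fun t => h * (invSqTail r (a - t) + invSqTail r (t - b))
  have hh : 0 ≤ h := (hu₀ 0).trans (hu 0)
  have hM₀ : 0 ≤ M := fun t =>
    mul_nonneg hh (add_nonneg (invSqTail_nonneg _ _) (invSqTail_nonneg _ _))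
  have hMint : Integrable M :=
    ((integrable_invSqTail hr).comp_sub_left a |>.add
      ((integrable_invSqTail hr).comp_sub_right b)).const_mul h
  calc ∫ t in S, u t / (|t - x| * √(|t - a| * |t - b|)) ≤ ∫ t in S, M t := by
        refine integral_mono_of_nonneg (Eventually.of_forall fun t => ?_) hMint.integrableOn ?_
        · exact div_nonneg (hu₀ t) (by positivity)
        · exact (ae_restrict_mem hS).mono fun t ht =>
            div_abs_sub_mul_sqrt_le hx (htail t ht) hr (hu₀ t) (hu t)
    _ ≤ ∫ t, M t := setIntegral_le_integral hMint (Eventually.of_forall hM₀)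
    _ = 2 * h / r := by
        rw [integral_const_mul, integral_add ((integrable_invSqTail hr).comp_sub_left a)
          ((integrable_invSqTail hr).comp_sub_right b), integral_sub_left_eq_self,
          integral_sub_right_eq_self, integral_invSqTail hr]
        ring

theorem stmt_15_general
    (zm zp : ℤ → ℝ)
    (hz : ∀ n, zm n < zp n)
    (v : ℝ → ℝ)
    (hvnn : ∀ t, 0 ≤ v t)
    (vn : ℤ → ℝ → ℝ)
    (hvn : ∀ n x, vn n x = Real.sqrt (|x - zm n| * |x - zp n|))
    (ρ : ℤ → ℝ)
    (hρ : ∀ n, ρ n = sInf (Set.image2 dist (Set.Ioo (zm n) (zp n))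
      ((⋃ m : ℤ, Set.Ioo (zm m) (zp m)) \ Set.Ioo (zm n) (zp n))))
    (hρpos : ∀ n, 0 < ρ n)
    (Vn : ℤ → ℝ → ℝ)
    (hVn : ∀ n x, Vn n x = (1 / Real.pi) *
      ∫ t in ((⋃ m : ℤ, Set.Ioo (zm m) (zp m)) \ Set.Ioo (zm n) (zp n)),
        v t / (|t - x| * vn n t))
    (hplus : ℝ) (hbdd : IsLUB (Set.range v) hplus)
    :
    ∀ n : ℤ, ∀ x ∈ Set.Ioo (zm n) (zp n), Vn n x ≤ 2 * hplus / (Real.pi * ρ n) := by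
  intro n x hx
  have htail : ∀ t ∈ (⋃ m : ℤ, Ioo (zm m) (zp m)) \ Ioo (zm n) (zp n),
      t ≤ zm n - ρ n ∨ zp n + ρ n ≤ t := fun t ht =>
    le_sub_or_add_le_of_forall_le_abs_sub (hz n) ht.2 fun y hy =>
      hρ n ▸ sInf_image2_dist_le hy ht
  have hS : MeasurableSet ((⋃ m : ℤ, Ioo (zm m) (zp m)) \ Ioo (zm n) (zp n)) :=
    (MeasurableSet.iUnion fun _ => measurableSet_Ioo).diff measurableSet_Ioo
  have hI := setIntegral_div_abs_sub_mul_sqrt_le hS (Ioo_subset_Icc_self hx) htail (hρpos n)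
    hvnn fun t => hbdd.1 ⟨t, rfl⟩
  simp only [← hvn n] at hI
  rw [hVn, one_div_mul_eq_div, mul_comm Real.pi, ← div_div]
  exact div_le_div_of_nonneg_right hI Real.pi_pos.le

theorem stmt_15
    (zm zp : ℤ → ℝ)
    (hz : ∀ n, zm n < zp n)
    (hsep : ∀ n, zp n < zm (n + 1))
    (v : ℝ → ℝ)
    (hvmeas : Measurable v)
    (hvint : MeasureTheory.Integrable v)
    (hvnn : ∀ t, 0 ≤ v t)
    (hvsupp : ∀ t ∉ ⋃ n : ℤ, Set.Ioo (zm n) (zp n), v t = 0)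
    (vn : ℤ → ℝ → ℝ)
    (hvn : ∀ n x, vn n x = Real.sqrt (|x - zm n| * |x - zp n|))
    (ρ : ℤ → ℝ)
    (hρ : ∀ n, ρ n = sInf (Set.image2 dist (Set.Ioo (zm n) (zp n))
      ((⋃ m : ℤ, Set.Ioo (zm m) (zp m)) \ Set.Ioo (zm n) (zp n))))
    (hρpos : ∀ n, 0 < ρ n)
    (Vn : ℤ → ℝ → ℝ)
    (hVn : ∀ n x, Vn n x = (1 / Real.pi) *
      ∫ t in ((⋃ m : ℤ, Set.Ioo (zm m) (zp m)) \ Set.Ioo (zm n) (zp n)),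
        v t / (|t - x| * vn n t))
    (hplus : ℝ) (hbdd : IsLUB (Set.range v) hplus)
    :
    ∀ n : ℤ, ∀ x ∈ Set.Ioo (zm n) (zp n), Vn n x ≤ 2 * hplus / (Real.pi * ρ n) :=
  stmt_15_general zm zp hz v hvnn vn hvn ρ hρ hρpos Vn hVn hplus hbdd
end

section
/- For every n ∈ ℤ, the function Vₙ is differentiable on gₙ, its derivative is Vₙ'(x) = (1/π)∫_{g∖gₙ} v(t) / ((t − x)|t − x| vₙ(t)) dt, and |Vₙ'(x)| ≤ Vₙ(x)/ρₙ for all x ∈ gₙ. -/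
/-!
Every `t ∈ g ∖ gₙ` lies at distance at least `ρₙ` from the closure of `gₙ`, hence from `x ∈ gₙ`
and from both endpoints of `gₙ`, so `vₙ(t) ≥ ρₙ`. Thus `v / vₙ` is integrable on `g ∖ gₙ`, and
the `x`-derivative `1 / ((t - x)|t - x|)` of the kernel `1 / |t - x|` is bounded by `1 / ρₙ²`
locally uniformly in `x`, which justifies differentiating under the integral sign; the estimate
follows from `1 / |t - x|² ≤ (1 / |t - x|) / ρₙ`.
-/

open MeasureTheory Set Topology Real

theorem hasDerivAt_inv_abs_sub {t y : ℝ} (hy : y ≠ t) :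
    HasDerivAt (fun z => |t - z|⁻¹) ((t - y) * |t - y|)⁻¹ y := by
  have hne : t - y ≠ 0 := sub_ne_zero.2 hy.symm
  have hsub : HasDerivAt (fun z => t - z) (-1) y := by
    simpa using (hasDerivAt_id y).const_sub t
  refine (((hasDerivAt_abs hne).comp y hsub).inv (abs_ne_zero.2 hne)).congr_deriv ?_
  rcases hne.lt_or_gt with h | h
  · simp only [Function.comp_apply, sign_neg h, SignType.coe_neg_one, abs_of_neg h]
    field_simp
  · simp only [Function.comp_apply, sign_pos h, SignType.coe_one, abs_of_pos h]
    field_simp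

theorem MeasureTheory.Integrable.div_of_le_abs {α : Type*} [MeasurableSpace α] {μ : Measure α}
    {f g : α → ℝ} (hf : Integrable f μ) (hg : AEMeasurable g μ) {ρ : ℝ} (hρ : 0 < ρ)
    (hfg : ∀ᵐ t ∂μ, ρ ≤ |g t|) : Integrable (fun t => f t / g t) μ := by
  refine (hf.norm.div_const ρ).mono' (hf.aemeasurable.div hg).aestronglyMeasurable ?_
  filter_upwards [hfg] with t ht
  rw [norm_div, Real.norm_eq_abs, Real.norm_eq_abs]
  exact div_le_div_of_nonneg_left (abs_nonneg _) hρ ht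

theorem sInf_image2_dist_le_of_mem_closure {α : Type*} [PseudoMetricSpace α] {A B : Set α}
    {a b : α} (ha : a ∈ closure A) (hb : b ∈ B) : sInf (image2 dist A B) ≤ dist a b := by
  have hbdd : BddBelow (image2 dist A B) :=
    ⟨0, by rintro _ ⟨_, _, _, _, rfl⟩; exact dist_nonneg⟩
  refine closure_minimal (fun a' ha' => ?_)
    (isClosed_le continuous_const (continuous_id.dist continuous_const)) ha
  exact csInf_le hbdd (mem_image2_of_mem ha' hb)

section SingularKernel

variable {μ : Measure ℝ} {w : ℝ → ℝ} {x ρ : ℝ}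

theorem integrable_div_abs_sub (hw : Integrable w μ) (hρ : 0 < ρ)
    (hsep : ∀ᵐ t ∂μ, ρ ≤ |t - x|) : Integrable (fun t => w t / |t - x|) μ :=
  hw.div_of_le_abs (by fun_prop) hρ (by simpa only [abs_abs] using hsep)

theorem hasDerivAt_integral_div_abs_sub (hw : Integrable w μ) (hρ : 0 < ρ) {U : Set ℝ}
    (hU : U ∈ 𝓝 x) (hsep : ∀ᵐ t ∂μ, ∀ y ∈ U, ρ ≤ |t - y|) :
    HasDerivAt (fun y => ∫ t, w t / |t - y| ∂μ) (∫ t, w t / ((t - x) * |t - x|) ∂μ) x := by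
  refine (hasDerivAt_integral_of_dominated_loc_of_deriv_le
    (F := fun y t => w t / |t - y|) (F' := fun y t => w t / ((t - y) * |t - y|))
    (bound := fun t => |w t| / ρ ^ 2) hU
    (.of_forall fun y => (hw.aemeasurable.div (by fun_prop)).aestronglyMeasurable)
    (integrable_div_abs_sub hw hρ (hsep.mono fun t ht => ht x (mem_of_mem_nhds hU)))
    (hw.aemeasurable.div (by fun_prop)).aestronglyMeasurable ?_ (hw.norm.div_const _) ?_).2
  · filter_upwards [hsep] with t ht y hy
    rw [Real.norm_eq_abs, abs_div, abs_mul, abs_abs, ← sq]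
    exact div_le_div_of_nonneg_left (abs_nonneg _) (by positivity)
      (pow_le_pow_left₀ hρ.le (ht y hy) 2)
  · filter_upwards [hsep] with t ht y hy
    have hyt : y ≠ t := fun h => by linarith [ht y hy, show |t - y| = 0 by simp [h]]
    simpa only [div_eq_mul_inv] using (hasDerivAt_inv_abs_sub hyt).const_mul (w t)

theorem abs_integral_div_mul_abs_sub_le (hw : Integrable w μ) (hw0 : 0 ≤ᵐ[μ] w) (hρ : 0 < ρ)
    (hsep : ∀ᵐ t ∂μ, ρ ≤ |t - x|) :
    |∫ t, w t / ((t - x) * |t - x|) ∂μ| ≤ (∫ t, w t / |t - x| ∂μ) / ρ := by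
  rw [← integral_div]
  refine abs_integral_le_integral_abs.trans <| integral_mono_of_nonneg
    (.of_forall fun t => abs_nonneg _) ((integrable_div_abs_sub hw hρ hsep).div_const ρ) ?_
  filter_upwards [hw0, hsep] with t h0 ht
  rw [abs_div, abs_mul, abs_abs, abs_of_nonneg h0, div_div]
  exact div_le_div_of_nonneg_left h0 (mul_pos (hρ.trans_le ht) hρ)
    (mul_le_mul_of_nonneg_left ht (abs_nonneg _))

end SingularKernel

theorem stmt_16_general
    (zm zp : ℤ → ℝ)
    (v : ℝ → ℝ)
    (hvint : MeasureTheory.Integrable v)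
    (hvnn : ∀ t, 0 ≤ v t)
    (vn : ℤ → ℝ → ℝ)
    (hvn : ∀ n x, vn n x = Real.sqrt (|x - zm n| * |x - zp n|))
    (ρ : ℤ → ℝ)
    (hρ : ∀ n, ρ n = sInf (Set.image2 dist (Set.Ioo (zm n) (zp n))
      ((⋃ m : ℤ, Set.Ioo (zm m) (zp m)) \ Set.Ioo (zm n) (zp n))))
    (hρpos : ∀ n, 0 < ρ n)
    (Vn : ℤ → ℝ → ℝ)
    (hVn : ∀ n x, Vn n x = (1 / Real.pi) *
      ∫ t in ((⋃ m : ℤ, Set.Ioo (zm m) (zp m)) \ Set.Ioo (zm n) (zp n)),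
        v t / (|t - x| * vn n t))
    :
    ∀ n : ℤ, ∀ x ∈ Set.Ioo (zm n) (zp n),
      HasDerivAt (Vn n) ((1 / Real.pi) *
        ∫ t in ((⋃ m : ℤ, Set.Ioo (zm m) (zp m)) \ Set.Ioo (zm n) (zp n)),
          v t / ((t - x) * |t - x| * vn n t)) x ∧
      |(1 / Real.pi) *
        ∫ t in ((⋃ m : ℤ, Set.Ioo (zm m) (zp m)) \ Set.Ioo (zm n) (zp n)),
          v t / ((t - x) * |t - x| * vn n t)| ≤ Vn n x / ρ n := by
  intro n x hx
  set S := (⋃ m : ℤ, Ioo (zm m) (zp m)) \ Ioo (zm n) (zp n)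
  have hS : MeasurableSet S :=
    (MeasurableSet.iUnion fun _ => measurableSet_Ioo).diff measurableSet_Ioo
  have hρn := hρpos n
  have hlt := hx.1.trans hx.2
  have hρ_le_dist : ∀ y ∈ Icc (zm n) (zp n), ∀ t ∈ S, ρ n ≤ |t - y| := fun y hy t ht => by
    rw [hρ n, ← Real.dist_eq, dist_comm]
    exact sInf_image2_dist_le_of_mem_closure (by rwa [closure_Ioo hlt.ne]) ht
  have hρ_le_vn : ∀ t ∈ S, ρ n ≤ vn n t := fun t ht => by
    rw [hvn, Real.le_sqrt hρn.le (by positivity), sq]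
    exact mul_le_mul (hρ_le_dist _ (left_mem_Icc.2 hlt.le) t ht)
      (hρ_le_dist _ (right_mem_Icc.2 hlt.le) t ht) hρn.le (abs_nonneg _)
  have hw : Integrable (fun t => v t / vn n t) (volume.restrict S) :=
    hvint.restrict.div_of_le_abs (by rw [funext (hvn n)]; fun_prop) hρn
      (ae_restrict_of_forall_mem hS fun t ht => (hρ_le_vn t ht).trans (le_abs_self _))
  have hw0 : 0 ≤ᵐ[volume.restrict S] fun t => v t / vn n t :=
    .of_forall fun t => div_nonneg (hvnn t) (by rw [hvn]; positivity)
  have hsep : ∀ᵐ t ∂volume.restrict S, ∀ y ∈ Ioo (zm n) (zp n), ρ n ≤ |t - y| :=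
    ae_restrict_of_forall_mem hS fun t ht y hy => hρ_le_dist y (Ioo_subset_Icc_self hy) t ht
  have hVn_eq : Vn n = fun y => 1 / π * ∫ t in S, v t / vn n t / |t - y| :=
    funext fun y => by simp_rw [hVn, div_mul_eq_div_div_swap]; rfl
  simp only [div_mul_eq_div_div_swap (v _) _ (vn n _)]
  refine ⟨hVn_eq ▸
    (hasDerivAt_integral_div_abs_sub hw hρn (Ioo_mem_nhds hx.1 hx.2) hsep).const_mul _, ?_⟩
  rw [hVn_eq, abs_mul, abs_of_pos (by positivity), mul_div_assoc]
  exact mul_le_mul_of_nonneg_left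
    (abs_integral_div_mul_abs_sub_le hw hw0 hρn (hsep.mono fun t ht => ht x hx)) (by positivity)

theorem stmt_16
    (zm zp : ℤ → ℝ)
    (hz : ∀ n, zm n < zp n)
    (hsep : ∀ n, zp n < zm (n + 1))
    (v : ℝ → ℝ)
    (hvmeas : Measurable v)
    (hvint : MeasureTheory.Integrable v)
    (hvnn : ∀ t, 0 ≤ v t)
    (hvsupp : ∀ t ∉ ⋃ n : ℤ, Set.Ioo (zm n) (zp n), v t = 0)
    (vn : ℤ → ℝ → ℝ)
    (hvn : ∀ n x, vn n x = Real.sqrt (|x - zm n| * |x - zp n|))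
    (ρ : ℤ → ℝ)
    (hρ : ∀ n, ρ n = sInf (Set.image2 dist (Set.Ioo (zm n) (zp n))
      ((⋃ m : ℤ, Set.Ioo (zm m) (zp m)) \ Set.Ioo (zm n) (zp n))))
    (hρpos : ∀ n, 0 < ρ n)
    (Vn : ℤ → ℝ → ℝ)
    (hVn : ∀ n x, Vn n x = (1 / Real.pi) *
      ∫ t in ((⋃ m : ℤ, Set.Ioo (zm m) (zp m)) \ Set.Ioo (zm n) (zp n)),
        v t / (|t - x| * vn n t))
    :
    ∀ n : ℤ, ∀ x ∈ Set.Ioo (zm n) (zp n),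
      HasDerivAt (Vn n) ((1 / Real.pi) *
        ∫ t in ((⋃ m : ℤ, Set.Ioo (zm m) (zp m)) \ Set.Ioo (zm n) (zp n)),
          v t / ((t - x) * |t - x| * vn n t)) x ∧
      |(1 / Real.pi) *
        ∫ t in ((⋃ m : ℤ, Set.Ioo (zm m) (zp m)) \ Set.Ioo (zm n) (zp n)),
          v t / ((t - x) * |t - x| * vn n t)| ≤ Vn n x / ρ n :=
  stmt_16_general zm zp v hvint hvnn vn hvn ρ hρ hρpos Vn hVn
end

section
/- Set Q₀ = (1/π)∫_ℝ v(t) dt, Mₙ = sup_{x∈gₙ} Vₙ(x), and suppose ρ > 0 satisfies ρₙ ≥ ρ for all n ∈ ℤ. Then Σ_{n∈ℤ} Mₙ ≤ π² Q₀ / (3 ρ²). -/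
/-!
Consecutive gaps are at least `ρ₀` wide, so a point of `gₘ` lies at distance at least
`|n - m| ρ₀` from every point of the closure of `gₙ`. Hence on `gₘ` the integrand of `Vₙ` is at
most `v(t) / ((n - m)² ρ₀²)`, and `Mₙ` is bounded by the convolution of the masses `∫_{gₘ} v`
with the kernel `k ↦ 1 / (k² ρ₀²)`. Summed over `n`, this convolution has total
`(∫ v) · Σ_{k ≠ 0} 1 / (k² ρ₀²) = (∫ v) · π² / (3 ρ₀²)`.
-/

open MeasureTheory Set Real

-- The `k = 0` term is `0⁻¹ = 0`.
lemma hasSum_inv_int_sq : HasSum (fun k : ℤ => ((k : ℝ) ^ 2)⁻¹) (π ^ 2 / 3) := by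
  have hnat : HasSum (fun n : ℕ => ((n : ℝ) ^ 2)⁻¹) (π ^ 2 / 6) := by
    simpa only [one_div] using hasSum_zeta_two
  have h := HasSum.of_nat_of_neg (f := fun k : ℤ => ((k : ℝ) ^ 2)⁻¹) (by exact_mod_cast hnat)
    (by simpa only [Int.cast_neg, Int.cast_natCast, neg_sq] using hnat)
  rwa [Int.cast_zero, zero_pow two_ne_zero, inv_zero, sub_zero,
    show π ^ 2 / 6 + π ^ 2 / 6 = π ^ 2 / 3 by ring] at h

section Convolution

variable {G R : Type*} [AddGroup G] [NormedRing R] [CompleteSpace R] {c a : G → R}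

lemma summable_mul_sub_prod (hc : Summable fun m => ‖c m‖) (ha : Summable fun k => ‖a k‖) :
    Summable fun p : G × G => c p.2 * a (p.1 - p.2) :=
  ((Equiv.prodComm G G).trans (Equiv.prodShear (Equiv.refl G) Equiv.subRight)).summable_iff.2
    (summable_mul_of_summable_norm hc ha)

lemma summable_mul_sub (hc : Summable fun m => ‖c m‖) (ha : Summable fun k => ‖a k‖) (n : G) :
    Summable fun m => c m * a (n - m) :=
  (summable_mul_sub_prod hc ha).prod_factor n

lemma hasSum_tsum_mul_sub (hc : Summable fun m => ‖c m‖) (ha : Summable fun k => ‖a k‖) :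
    HasSum (fun n => ∑' m, c m * a (n - m)) ((∑' m, c m) * ∑' k, a k) := by
  have h := (summable_mul_sub_prod hc ha).hasSum.prod_fiberwise
    fun n => (summable_mul_sub hc ha n).hasSum
  rw [tsum_mul_tsum_of_summable_norm hc ha, ← ((Equiv.prodComm G G).trans
    (Equiv.prodShear (Equiv.refl G) Equiv.subRight)).tsum_eq]
  exact h

end Convolution

lemma setIntegral_iUnion_le_tsum {X ι : Type*} [MeasurableSpace X] {μ : Measure X} [Countable ι]
    {s : ι → Set X} (hs : ∀ i, MeasurableSet (s i)) (hd : Pairwise (Function.onFun Disjoint s))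
    {f : X → ℝ} (hf : IntegrableOn f (⋃ i, s i) μ) {B : ι → ℝ}
    (hB : ∀ i, ∫ x in s i, f x ∂μ ≤ B i) (hBsum : Summable B) :
    ∫ x in ⋃ i, s i, f x ∂μ ≤ ∑' i, B i :=
  hasSum_le hB (hasSum_integral_iUnion hs hd hf) hBsum.hasSum

lemma inv_sq_intCast_le_one (k : ℤ) : ((k : ℝ) ^ 2)⁻¹ ≤ 1 := by
  rcases eq_or_ne k 0 with rfl | hk
  · simp
  · exact inv_le_one_of_one_le₀
      ((one_le_sq_iff_one_le_abs _).2 (by exact_mod_cast Int.one_le_abs hk))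

lemma sInf_image2_dist_Ioo_le_sub {a b c d : ℝ} (hab : a < b) (hbc : b ≤ c) (hcd : c < d)
    {T : Set ℝ} (hT : Ioo c d ⊆ T) : sInf (image2 dist (Ioo a b) T) ≤ c - b := by
  have hbdd : BddBelow (image2 dist (Ioo a b) T) :=
    ⟨0, forall_mem_image2.2 fun _ _ _ _ => dist_nonneg⟩
  refine le_of_forall_pos_le_add fun ε hε => ?_
  set δ := min ε (min (b - a) (d - c))
  have hδ : 0 < δ := lt_min hε (lt_min (by linarith) (by linarith))
  have hδab : δ ≤ b - a := (min_le_right _ _).trans (min_le_left _ _)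
  have hδcd : δ ≤ d - c := (min_le_right _ _).trans (min_le_right _ _)
  have hx : b - δ / 2 ∈ Ioo a b := ⟨by linarith, by linarith⟩
  have hy : c + δ / 2 ∈ T := hT ⟨by linarith, by linarith⟩
  calc sInf (image2 dist (Ioo a b) T) ≤ dist (b - δ / 2) (c + δ / 2) :=
        csInf_le hbdd (mem_image2_of_mem hx hy)
    _ = c - b + δ := by rw [Real.dist_eq, abs_of_nonpos (by linarith)]; ring
    _ ≤ c - b + ε := by linarith [min_le_left ε (min (b - a) (d - c))]

section Gaps

variable {zm zp : ℤ → ℝ} {ρ₀ : ℝ}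

lemma zp_add_le_zm_succ_of_le_sInf_dist (hz : ∀ n, zm n < zp n) (hsep : ∀ n, zp n < zm (n + 1))
    (k : ℤ) (hρ₀ : ρ₀ ≤ sInf (image2 dist (Ioo (zm k) (zp k))
      ((⋃ m, Ioo (zm m) (zp m)) \ Ioo (zm k) (zp k)))) :
    zp k + ρ₀ ≤ zm (k + 1) := by
  have hsub : Ioo (zm (k + 1)) (zp (k + 1)) ⊆ (⋃ m, Ioo (zm m) (zp m)) \ Ioo (zm k) (zp k) :=
    fun t ht => ⟨mem_iUnion.2 ⟨k + 1, ht⟩, fun h => by linarith [h.2, ht.1, hsep k]⟩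
  linarith [sInf_image2_dist_Ioo_le_sub (hz k) (hsep k).le (hz (k + 1)) hsub]

lemma zp_add_mul_le_zm (hz : ∀ n, zm n ≤ zp n) (hgap : ∀ k, zp k + ρ₀ ≤ zm (k + 1))
    {m n : ℤ} (hmn : m < n) : zp m + (n - m) * ρ₀ ≤ zm n := by
  induction n, hmn using Int.leInduction with
  | base => push_cast; linarith [hgap m]
  | succ n _ ih => push_cast; linarith [hgap n, hz n]

lemma mul_le_abs_sub_of_mem_Icc (hz : ∀ n, zm n ≤ zp n) (hgap : ∀ k, zp k + ρ₀ ≤ zm (k + 1))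
    {m n : ℤ} (hmn : m ≠ n) {t x : ℝ} (ht : t ∈ Icc (zm m) (zp m)) (hx : x ∈ Icc (zm n) (zp n)) :
    |(n - m : ℝ)| * ρ₀ ≤ |t - x| := by
  rcases hmn.lt_or_gt with h | h
  · have hc := zp_add_mul_le_zm hz hgap h
    have : (m : ℝ) < n := by exact_mod_cast h
    rw [abs_of_pos (by linarith), abs_sub_comm]
    exact le_abs.2 (Or.inl (by linarith [ht.2, hx.1]))
  · have hc := zp_add_mul_le_zm hz hgap h
    have : (n : ℝ) < m := by exact_mod_cast h
    rw [abs_of_neg (by linarith)]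
    exact le_abs.2 (Or.inl (by linarith [ht.1, hx.2]))

lemma pairwise_disjoint_Ioo_of_gap (hz : ∀ n, zm n ≤ zp n) (hgap : ∀ k, zp k + ρ₀ ≤ zm (k + 1))
    (hρ₀ : 0 < ρ₀) : Pairwise (Function.onFun Disjoint fun n => Ioo (zm n) (zp n)) := by
  intro m n hmn
  refine disjoint_left.2 fun t htm htn => ?_
  have h := mul_le_abs_sub_of_mem_Icc hz hgap hmn (Ioo_subset_Icc_self htm)
    (Ioo_subset_Icc_self htn)
  have : (0 : ℝ) < |(n - m : ℝ)| := abs_pos.2 (sub_ne_zero.2 (by exact_mod_cast hmn.symm))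
  rw [sub_self, abs_zero] at h
  nlinarith

lemma sq_mul_le_abs_sub_mul_sqrt (hz : ∀ n, zm n ≤ zp n) (hgap : ∀ k, zp k + ρ₀ ≤ zm (k + 1))
    (hρ₀ : 0 ≤ ρ₀) {m n : ℤ} (hmn : m ≠ n) {t x : ℝ} (ht : t ∈ Icc (zm m) (zp m))
    (hx : x ∈ Icc (zm n) (zp n)) :
    ((n - m : ℝ) * ρ₀) ^ 2 ≤ |t - x| * √(|t - zm n| * |t - zp n|) := by
  have hsep := fun y (hy : y ∈ Icc (zm n) (zp n)) => mul_le_abs_sub_of_mem_Icc hz hgap hmn ht hy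
  set d := |(n - m : ℝ)| * ρ₀
  have hd : 0 ≤ d := by positivity
  have hsqrt : d ≤ √(|t - zm n| * |t - zp n|) := by
    rw [← Real.sqrt_mul_self hd]
    exact Real.sqrt_le_sqrt
      (mul_le_mul (hsep _ ⟨le_rfl, hz n⟩) (hsep _ ⟨hz n, le_rfl⟩) hd (abs_nonneg _))
  calc ((n - m : ℝ) * ρ₀) ^ 2 = d * d := by rw [← sq, mul_pow, mul_pow, sq_abs]
    _ ≤ |t - x| * √(|t - zm n| * |t - zp n|) := mul_le_mul (hsep x hx) hsqrt hd (abs_nonneg _)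

lemma div_le_mul_inv_sq (hz : ∀ n, zm n ≤ zp n) (hgap : ∀ k, zp k + ρ₀ ≤ zm (k + 1))
    (hρ₀ : 0 < ρ₀) {m n : ℤ} (hmn : m ≠ n) {t x : ℝ} (ht : t ∈ Icc (zm m) (zp m))
    (hx : x ∈ Icc (zm n) (zp n)) {y : ℝ} (hy : 0 ≤ y) :
    y / (|t - x| * √(|t - zm n| * |t - zp n|)) ≤ y * ((((n - m : ℤ) : ℝ) ^ 2)⁻¹ * (ρ₀ ^ 2)⁻¹) := by
  have hnm : ((n - m : ℤ) : ℝ) ≠ 0 := by exact_mod_cast sub_ne_zero.2 hmn.symm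
  rw [← mul_inv, ← div_eq_mul_inv, ← mul_pow]
  refine div_le_div_of_nonneg_left hy (by positivity) ?_
  push_cast
  exact sq_mul_le_abs_sub_mul_sqrt hz hgap hρ₀.le hmn ht hx

lemma setIntegral_diff_div_le_tsum (hz : ∀ n, zm n ≤ zp n)
    (hgap : ∀ k, zp k + ρ₀ ≤ zm (k + 1)) (hρ₀ : 0 < ρ₀) {v : ℝ → ℝ} (hv : Integrable v)
    (hvnn : ∀ t, 0 ≤ v t) {n : ℤ} {x : ℝ} (hx : x ∈ Icc (zm n) (zp n))
    (hsum : Summable fun m =>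
      (∫ t in Ioo (zm m) (zp m), v t) * ((((n - m : ℤ) : ℝ) ^ 2)⁻¹ * (ρ₀ ^ 2)⁻¹)) :
    ∫ t in (⋃ m, Ioo (zm m) (zp m)) \ Ioo (zm n) (zp n),
        v t / (|t - x| * √(|t - zm n| * |t - zp n|)) ≤
      ∑' m, (∫ t in Ioo (zm m) (zp m), v t) * ((((n - m : ℤ) : ℝ) ^ 2)⁻¹ * (ρ₀ ^ 2)⁻¹) := by
  set g : ℤ → Set ℝ := fun m => Ioo (zm m) (zp m)
  set φ : ℝ → ℝ := fun t => v t / (|t - x| * √(|t - zm n| * |t - zp n|))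
  have hdisj := pairwise_disjoint_Ioo_of_gap hz hgap hρ₀
  have hle : ∀ m, ∀ t ∈ g m \ g n, φ t ≤ v t * ((((n - m : ℤ) : ℝ) ^ 2)⁻¹ * (ρ₀ ^ 2)⁻¹) :=
    fun m t ht => div_le_mul_inv_sq hz hgap hρ₀ (by rintro rfl; exact ht.2 ht.1)
      (Ioo_subset_Icc_self ht.1) hx (hvnn t)
  have hmeas : ∀ m, MeasurableSet (g m \ g n) := fun m => measurableSet_Ioo.diff measurableSet_Ioo
  have hint : IntegrableOn φ (⋃ m, g m \ g n) := by
    refine (hv.mul_const (ρ₀ ^ 2)⁻¹).integrableOn.mono' ?_ ?_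
    · exact (hv.aemeasurable.div (by fun_prop)).aestronglyMeasurable.restrict
    · refine (ae_restrict_iff' (MeasurableSet.iUnion hmeas)).2 (ae_of_all _ fun t ht => ?_)
      obtain ⟨m, hm⟩ := mem_iUnion.1 ht
      have hφ : 0 ≤ φ t := div_nonneg (hvnn t) (by positivity)
      rw [Real.norm_of_nonneg hφ]
      refine (hle m t hm).trans (mul_le_mul_of_nonneg_left ?_ (hvnn t))
      exact mul_le_of_le_one_left (by positivity) (inv_sq_intCast_le_one _)
  rw [iUnion_sdiff]
  refine setIntegral_iUnion_le_tsum hmeas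
    (fun i j hij => (hdisj hij).mono sdiff_subset sdiff_subset) hint (fun m => ?_) hsum
  rcases eq_or_ne m n with rfl | hmn
  · simp -- both sides vanish, the right one because `(0 ^ 2)⁻¹ = 0`
  calc ∫ t in g m \ g n, φ t
      ≤ ∫ t in g m \ g n, v t * ((((n - m : ℤ) : ℝ) ^ 2)⁻¹ * (ρ₀ ^ 2)⁻¹) :=
        setIntegral_mono_on (hint.mono_set (subset_iUnion (fun m => g m \ g n) m))
          (hv.mul_const _).integrableOn (hmeas m) (hle m)
    _ = (∫ t in g m, v t) * ((((n - m : ℤ) : ℝ) ^ 2)⁻¹ * (ρ₀ ^ 2)⁻¹) := by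
        rw [integral_mul_const, (hdisj hmn).sdiff_eq_left]

end Gaps

theorem stmt_18_general
    (zm zp : ℤ → ℝ)
    (hz : ∀ n, zm n < zp n)
    (hsep : ∀ n, zp n < zm (n + 1))
    (v : ℝ → ℝ)
    (hvint : MeasureTheory.Integrable v)
    (hvnn : ∀ t, 0 ≤ v t)
    (vn : ℤ → ℝ → ℝ)
    (hvn : ∀ n x, vn n x = Real.sqrt (|x - zm n| * |x - zp n|))
    (ρ : ℤ → ℝ)
    (hρ : ∀ n, ρ n = sInf (Set.image2 dist (Set.Ioo (zm n) (zp n))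
      ((⋃ m : ℤ, Set.Ioo (zm m) (zp m)) \ Set.Ioo (zm n) (zp n))))
    (Vn : ℤ → ℝ → ℝ)
    (hVn : ∀ n x, Vn n x = (1 / Real.pi) *
      ∫ t in ((⋃ m : ℤ, Set.Ioo (zm m) (zp m)) \ Set.Ioo (zm n) (zp n)),
        v t / (|t - x| * vn n t))
    (Q₀ : ℝ) (hQ₀ : Q₀ = (1 / Real.pi) * ∫ t, v t)
    (Mn : ℤ → ℝ)
    (hMn : ∀ n, IsLUB (Vn n '' Set.Ioo (zm n) (zp n)) (Mn n))
    (ρ₀ : ℝ) (hρ₀ : 0 < ρ₀) (hρ₀le : ∀ n, ρ₀ ≤ ρ n)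
    :
    Summable Mn ∧ ∑' n : ℤ, Mn n ≤ Real.pi ^ 2 * Q₀ / (3 * ρ₀ ^ 2) := by
  obtain rfl : vn = fun n x => √(|x - zm n| * |x - zp n|) := funext fun n => funext (hvn n)
  have hgap k : zp k + ρ₀ ≤ zm (k + 1) :=
    zp_add_le_zm_succ_of_le_sInf_dist hz hsep k ((hρ₀le k).trans_eq (hρ k))
  set c : ℤ → ℝ := fun m => ∫ t in Ioo (zm m) (zp m), v t
  set a : ℤ → ℝ := fun k => ((k : ℝ) ^ 2)⁻¹ * (ρ₀ ^ 2)⁻¹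
  have hc : HasSum c (∫ t in ⋃ m, Ioo (zm m) (zp m), v t) :=
    hasSum_integral_iUnion (fun _ => measurableSet_Ioo)
      (pairwise_disjoint_Ioo_of_gap (fun n => (hz n).le) hgap hρ₀) hvint.integrableOn
  have ha : HasSum a (π ^ 2 / 3 * (ρ₀ ^ 2)⁻¹) := hasSum_inv_int_sq.mul_right _
  have hcn : Summable fun m => ‖c m‖ := hc.summable.norm
  have han : Summable fun k => ‖a k‖ := ha.summable.norm
  have hV n : ∀ x ∈ Ioo (zm n) (zp n), Vn n x ≤ π⁻¹ * ∑' m, c m * a (n - m) := fun x hx => by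
    rw [hVn, one_div]
    gcongr
    exact setIntegral_diff_div_le_tsum (fun n => (hz n).le) hgap hρ₀ hvint hvnn
      (Ioo_subset_Icc_self hx) (summable_mul_sub hcn han n)
  have hM n : Mn n ≤ π⁻¹ * ∑' m, c m * a (n - m) :=
    (hMn n).2 (forall_mem_image.2 (hV n))
  have hM₀ n : 0 ≤ Mn n := by
    have hmid : (zm n + zp n) / 2 ∈ Ioo (zm n) (zp n) := ⟨by linarith [hz n], by linarith [hz n]⟩
    refine le_trans ?_ ((hMn n).1 (mem_image_of_mem _ hmid))
    rw [hVn]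
    exact mul_nonneg (by positivity) (setIntegral_nonneg
      ((MeasurableSet.iUnion fun _ => measurableSet_Ioo).diff measurableSet_Ioo) fun t _ =>
      div_nonneg (hvnn t) (by positivity))
  have hconv := hasSum_tsum_mul_sub hcn han
  have hsum : Summable Mn := .of_nonneg_of_le hM₀ hM (hconv.summable.mul_left _)
  refine ⟨hsum, (hsum.tsum_le_tsum hM (hconv.summable.mul_left _)).trans ?_⟩
  have hU : ∫ t in ⋃ m, Ioo (zm m) (zp m), v t ≤ ∫ t, v t :=
    setIntegral_le_integral hvint (ae_of_all _ hvnn)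
  rw [tsum_mul_left, hconv.tsum_eq, hc.tsum_eq, ha.tsum_eq, hQ₀]
  have hπ := pi_pos
  calc π⁻¹ * ((∫ t in ⋃ m, Ioo (zm m) (zp m), v t) * (π ^ 2 / 3 * (ρ₀ ^ 2)⁻¹))
      ≤ π⁻¹ * ((∫ t, v t) * (π ^ 2 / 3 * (ρ₀ ^ 2)⁻¹)) := by gcongr
    _ = π ^ 2 * (1 / π * ∫ t, v t) / (3 * ρ₀ ^ 2) := by field_simp

theorem stmt_18
    (zm zp : ℤ → ℝ)
    (hz : ∀ n, zm n < zp n)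
    (hsep : ∀ n, zp n < zm (n + 1))
    (v : ℝ → ℝ)
    (hvmeas : Measurable v)
    (hvint : MeasureTheory.Integrable v)
    (hvnn : ∀ t, 0 ≤ v t)
    (hvsupp : ∀ t ∉ ⋃ n : ℤ, Set.Ioo (zm n) (zp n), v t = 0)
    (vn : ℤ → ℝ → ℝ)
    (hvn : ∀ n x, vn n x = Real.sqrt (|x - zm n| * |x - zp n|))
    (ρ : ℤ → ℝ)
    (hρ : ∀ n, ρ n = sInf (Set.image2 dist (Set.Ioo (zm n) (zp n))
      ((⋃ m : ℤ, Set.Ioo (zm m) (zp m)) \ Set.Ioo (zm n) (zp n))))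
    (hρpos : ∀ n, 0 < ρ n)
    (Vn : ℤ → ℝ → ℝ)
    (hVn : ∀ n x, Vn n x = (1 / Real.pi) *
      ∫ t in ((⋃ m : ℤ, Set.Ioo (zm m) (zp m)) \ Set.Ioo (zm n) (zp n)),
        v t / (|t - x| * vn n t))
    (Q₀ : ℝ) (hQ₀ : Q₀ = (1 / Real.pi) * ∫ t, v t)
    (Mn : ℤ → ℝ)
    (hMn : ∀ n, IsLUB (Vn n '' Set.Ioo (zm n) (zp n)) (Mn n))
    (ρ₀ : ℝ) (hρ₀ : 0 < ρ₀) (hρ₀le : ∀ n, ρ₀ ≤ ρ n)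
    :
    Summable Mn ∧ ∑' n : ℤ, Mn n ≤ Real.pi ^ 2 * Q₀ / (3 * ρ₀ ^ 2) :=
  stmt_18_general zm zp hz hsep v hvint hvnn vn hvn ρ hρ Vn hVn Q₀ hQ₀ Mn hMn ρ₀ hρ₀ hρ₀le
end

section
/- Assume in addition that ∫_ℝ t² v(t) dt < ∞ and set Q₀ = (1/π)∫_ℝ v(t) dt and Q₂ = (1/π)∫_ℝ t² v(t) dt. Then for every n ∈ ℤ with zₙ⁻ · zₙ⁺ ≠ 0 and every x in the closure of gₙ with x ≠ 0, Vₙ(x) ≤ (2 / (|x| √(|zₙ⁺ zₙ⁻|))) · (Q₀ + Q₂/ρₙ²), where on the closure Vₙ is given by the same integral formula. -/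
open MeasureTheory

lemma aux19 (ρ s x t A B : ℝ) (hρpos : 0 < ρ)
    (hxpos : 0 < |x|) (hspos : 0 < s)
    (ha : ρ ≤ A) (hb : ρ ≤ B) (hxt : ρ ≤ |t - x|)
    (hzm : s ^ 2 ≤ (|t| + A) * (|t| + B)) :
    1 / (|t - x| * Real.sqrt (A * B)) ≤ 2 / (|x| * s) * (1 + t ^ 2 / ρ ^ 2) := by
  set u := |t| with hudef
  have hu0 : 0 ≤ u := abs_nonneg t
  have hA0 : 0 < A := hρpos.trans_le ha
  have hB0 : 0 < B := hρpos.trans_le hb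
  have hxt0 : 0 < |t - x| := hρpos.trans_le hxt
  set w := Real.sqrt (A * B) with hwdef
  have hw0 : 0 < w := Real.sqrt_pos.2 (mul_pos hA0 hB0)
  have hw2 : w ^ 2 = A * B := Real.sq_sqrt (mul_pos hA0 hB0).le
  have h2 : s * ρ ≤ (ρ + u) * w := by
    have e1 : (u + A) * ρ ≤ A * (ρ + u) := by nlinarith
    have e2 : (u + B) * ρ ≤ B * (ρ + u) := by nlinarith
    have e3 := mul_le_mul e1 e2 (by positivity) (by positivity)
    have hsq : (s * ρ) ^ 2 ≤ ((ρ + u) * w) ^ 2 := by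
      nlinarith [mul_le_mul_of_nonneg_right hzm (sq_nonneg ρ)]
    calc s * ρ = Real.sqrt ((s * ρ) ^ 2) := (Real.sqrt_sq (by positivity)).symm
      _ ≤ Real.sqrt (((ρ + u) * w) ^ 2) := Real.sqrt_le_sqrt hsq
      _ = (ρ + u) * w := Real.sqrt_sq (by positivity)
  have h1 : |x| ≤ |t - x| + u := by
    have hx : x = (x - t) + t := by ring
    calc |x| = |(x - t) + t| := by rw [← hx]
      _ ≤ |x - t| + |t| := abs_add_le _ _
      _ = |t - x| + u := by rw [abs_sub_comm]
  have h3 : (|t - x| + u) * ρ ≤ (ρ + u) * |t - x| := by nlinarith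
  have hP : |x| * s * ρ ^ 2 ≤ 2 * (ρ ^ 2 + u ^ 2) * (|t - x| * w) := by
    calc |x| * s * ρ ^ 2 ≤ (|t - x| + u) * s * ρ ^ 2 := by
          nlinarith [mul_le_mul_of_nonneg_right h1 (mul_nonneg hspos.le (sq_nonneg ρ))]
      _ = ((|t - x| + u) * ρ) * (s * ρ) := by ring
      _ ≤ ((ρ + u) * |t - x|) * ((ρ + u) * w) := mul_le_mul h3 h2 (by positivity) (by positivity)
      _ = (ρ + u) ^ 2 * (|t - x| * w) := by ring
      _ ≤ 2 * (ρ ^ 2 + u ^ 2) * (|t - x| * w) :=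
          mul_le_mul_of_nonneg_right (by nlinarith [sq_nonneg (ρ - u)]) (by positivity)
  have key : |x| * s ≤ 2 * (1 + t ^ 2 / ρ ^ 2) * (|t - x| * w) := by
    have ht2 : t ^ 2 = u ^ 2 := (sq_abs t).symm
    rw [ht2, show (2 * (1 + u ^ 2 / ρ ^ 2) : ℝ) = 2 * (ρ ^ 2 + u ^ 2) / ρ ^ 2 by
      field_simp, div_mul_eq_mul_div, le_div_iff₀ (by positivity)]
    nlinarith [hP]
  rw [div_mul_eq_mul_div, div_le_div_iff₀ (by positivity) (by positivity), one_mul]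
  nlinarith [key]

theorem stmt_19
    (zm zp : ℤ → ℝ)
    (hz : ∀ n, zm n < zp n)
    (hsep : ∀ n, zp n < zm (n + 1))
    (v : ℝ → ℝ)
    (hvmeas : Measurable v)
    (hvint : MeasureTheory.Integrable v)
    (hvnn : ∀ t, 0 ≤ v t)
    (hvsupp : ∀ t ∉ ⋃ n : ℤ, Set.Ioo (zm n) (zp n), v t = 0)
    (vn : ℤ → ℝ → ℝ)
    (hvn : ∀ n x, vn n x = Real.sqrt (|x - zm n| * |x - zp n|))
    (ρ : ℤ → ℝ)
    (hρ : ∀ n, ρ n = sInf (Set.image2 dist (Set.Ioo (zm n) (zp n))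
      ((⋃ m : ℤ, Set.Ioo (zm m) (zp m)) \ Set.Ioo (zm n) (zp n))))
    (hρpos : ∀ n, 0 < ρ n)
    (Vn : ℤ → ℝ → ℝ)
    (hVn : ∀ n x, Vn n x = (1 / Real.pi) *
      ∫ t in ((⋃ m : ℤ, Set.Ioo (zm m) (zp m)) \ Set.Ioo (zm n) (zp n)),
        v t / (|t - x| * vn n t))
    (hQ2int : MeasureTheory.Integrable (fun t => t ^ 2 * v t))
    (Q₀ Q₂ : ℝ) (hQ₀ : Q₀ = (1 / Real.pi) * ∫ t, v t)
    (hQ₂ : Q₂ = (1 / Real.pi) * ∫ t, t ^ 2 * v t)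
    :
    ∀ n : ℤ, zm n * zp n ≠ 0 →
      ∀ x ∈ closure (Set.Ioo (zm n) (zp n)), x ≠ 0 →
        Vn n x ≤ 2 / (|x| * Real.sqrt |zp n * zm n|) * (Q₀ + Q₂ / ρ n ^ 2) := by
  intro n hzz x hx hx0
  have hπ : (0:ℝ) < Real.pi := Real.pi_pos
  set S : Set ℝ := (⋃ m : ℤ, Set.Ioo (zm m) (zp m)) \ Set.Ioo (zm n) (zp n) with hSdef
  have hSmeas : MeasurableSet S :=
    (MeasurableSet.iUnion fun m => measurableSet_Ioo).diff measurableSet_Ioo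
  set s : ℝ := Real.sqrt |zp n * zm n| with hsdef
  have hxpos : 0 < |x| := abs_pos.2 hx0
  have hspos : 0 < s := Real.sqrt_pos.2 (abs_pos.2 (by
    intro h; exact hzz (by rw [mul_comm]; exact h)))
  -- distance bound from points of S to the closure of the gap
  have hdist : ∀ t ∈ S, ∀ y ∈ closure (Set.Ioo (zm n) (zp n)), ρ n ≤ |t - y| := by
    intro t ht y hy
    have hclosed : IsClosed {y : ℝ | ρ n ≤ |t - y|} := by
      have : Continuous fun y : ℝ => |t - y| := (continuous_const.sub continuous_id).abs
      exact isClosed_le continuous_const this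
    have hsub : Set.Ioo (zm n) (zp n) ⊆ {y : ℝ | ρ n ≤ |t - y|} := by
      intro y hy
      have hmem : dist y t ∈ Set.image2 dist (Set.Ioo (zm n) (zp n)) S :=
        Set.mem_image2_of_mem hy ht
      have hbdd : BddBelow (Set.image2 dist (Set.Ioo (zm n) (zp n)) S) := by
        refine ⟨0, fun d hd => ?_⟩
        obtain ⟨a, ha, b, hb, rfl⟩ := hd
        exact dist_nonneg
      have hle : ρ n ≤ dist y t := by rw [hρ n]; exact csInf_le hbdd hmem
      simpa [Set.mem_setOf_eq, Real.dist_eq, abs_sub_comm] using hle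
    exact closure_minimal hsub hclosed hy
  have hzmcl : zm n ∈ closure (Set.Ioo (zm n) (zp n)) := by
    rw [closure_Ioo (hz n).ne]; exact ⟨le_refl _, (hz n).le⟩
  have hzpcl : zp n ∈ closure (Set.Ioo (zm n) (zp n)) := by
    rw [closure_Ioo (hz n).ne]; exact ⟨(hz n).le, le_refl _⟩
  -- pointwise bound on S
  have hpw : ∀ t ∈ S, v t / (|t - x| * vn n t) ≤
      2 / (|x| * s) * (v t + t ^ 2 * v t / ρ n ^ 2) := by
    intro t ht
    have tri : ∀ c : ℝ, |c| ≤ |t| + |t - c| := by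
      intro c
      have hc : c = (c - t) + t := by ring
      calc |c| = |(c - t) + t| := by rw [← hc]
        _ ≤ |c - t| + |t| := abs_add_le _ _
        _ = |t| + |t - c| := by rw [abs_sub_comm]; ring
    have hs2 : s ^ 2 ≤ (|t| + |t - zm n|) * (|t| + |t - zp n|) := by
      have h1 : s ^ 2 = |zm n| * |zp n| := by
        rw [hsdef, Real.sq_sqrt (abs_nonneg _), abs_mul, mul_comm]
      rw [h1]
      exact mul_le_mul (tri (zm n)) (tri (zp n)) (abs_nonneg _) (by positivity)
    have haux := aux19 (ρ n) s x t (|t - zm n|) (|t - zp n|) (hρpos n) hxpos hspos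
      (hdist t ht (zm n) hzmcl) (hdist t ht (zp n) hzpcl) (hdist t ht x hx) hs2
    rw [hvn]
    have hD0 : (0:ℝ) ≤ |t - x| * Real.sqrt (|t - zm n| * |t - zp n|) := by positivity
    calc v t / (|t - x| * Real.sqrt (|t - zm n| * |t - zp n|))
        = v t * (1 / (|t - x| * Real.sqrt (|t - zm n| * |t - zp n|))) := by ring
      _ ≤ v t * (2 / (|x| * s) * (1 + t ^ 2 / ρ n ^ 2)) :=
          mul_le_mul_of_nonneg_left haux (hvnn t)
      _ = 2 / (|x| * s) * (v t + t ^ 2 * v t / ρ n ^ 2) := by ring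
  -- integrability of the dominating function
  have hgint : Integrable (fun t => v t + t ^ 2 * v t / ρ n ^ 2) :=
    hvint.add (hQ2int.div_const _)
  have hgnn : ∀ t, 0 ≤ v t + t ^ 2 * v t / ρ n ^ 2 := fun t =>
    add_nonneg (hvnn t) (div_nonneg (mul_nonneg (sq_nonneg t) (hvnn t)) (sq_nonneg _))
  have hchain : (∫ t in S, v t / (|t - x| * vn n t)) ≤
      2 / (|x| * s) * ((∫ t, v t) + (∫ t, t ^ 2 * v t) / ρ n ^ 2) := by
    calc (∫ t in S, v t / (|t - x| * vn n t))
        ≤ ∫ t in S, 2 / (|x| * s) * (v t + t ^ 2 * v t / ρ n ^ 2) := by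
          refine integral_mono_of_nonneg (ae_of_all _ fun t => ?_)
            ((hgint.const_mul _).restrict)
            ((ae_restrict_iff' hSmeas).2 (ae_of_all _ hpw))
          exact div_nonneg (hvnn t)
            (mul_nonneg (abs_nonneg _) (by rw [hvn]; exact Real.sqrt_nonneg _))
      _ = 2 / (|x| * s) * ∫ t in S, (v t + t ^ 2 * v t / ρ n ^ 2) :=
          integral_const_mul _ _
      _ ≤ 2 / (|x| * s) * ∫ t, (v t + t ^ 2 * v t / ρ n ^ 2) := by
          refine mul_le_mul_of_nonneg_left ?_ (by positivity)
          exact setIntegral_le_integral hgint (ae_of_all _ hgnn)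
      _ = 2 / (|x| * s) * ((∫ t, v t) + (∫ t, t ^ 2 * v t) / ρ n ^ 2) := by
          rw [integral_add hvint (hQ2int.div_const _), integral_div]
  rw [hVn, hQ₀, hQ₂]
  calc (1 / Real.pi) * ∫ t in S, v t / (|t - x| * vn n t)
      ≤ (1 / Real.pi) * (2 / (|x| * s) * ((∫ t, v t) + (∫ t, t ^ 2 * v t) / ρ n ^ 2)) :=
        mul_le_mul_of_nonneg_left hchain (by positivity)
    _ = 2 / (|x| * s) * ((1 / Real.pi * ∫ t, v t)
          + (1 / Real.pi * ∫ t, t ^ 2 * v t) / ρ n ^ 2) := by ring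
end
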